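/- arXiv:1912.03052 — 9 statements merged into one kernel-verified Lean document; each statement's English description precedes it below -/
import Mathlib

section
/- Let ν be a σ-finite Borel measure on ℝ with ν({0}) = 0, let t ∈ (0,∞], and let f : [0,∞) → ℝ be Borel measurable such that preimages under f of Lebesgue null sets contained in ℝ \ {0} are Lebesgue null, i.e., λ¹(f⁻¹(B)) = 0 for every Borel set B ⊆ ℝ \ {0} with λ¹(B) = 0. Then the measure ν_{f,t} is absolutely continuous with respect to Lebesgue measure: ν_{f,t}(B) = 0 for every Borel set B ⊆ ℝ with λ¹(B) = 0. -/
open MeasureTheory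
open scoped ENNReal

/-- Let `ν` be a σ-finite Borel measure on `ℝ` with `ν {0} = 0`, `t ∈ (0,∞]`,
and let `f : [0,∞) → ℝ` be Borel measurable such that preimages under `f` of Lebesgue null
sets contained in `ℝ \ {0}` are Lebesgue null. Then the measure `ν_{f,t}` defined by
`ν_{f,t}(B) = ∫_0^t ν {x | f s * x ∈ B \ {0}} ds` is absolutely continuous with respect to
Lebesgue measure. -/
theorem stmt3
    (ν : Measure ℝ) [SigmaFinite ν] (hν0 : ν ({0} : Set ℝ) = 0)
    (t : ℝ≥0∞) (ht : 0 < t)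
    (f : ℝ → ℝ) (hf : Measurable f)
    (hLusin : ∀ B : Set ℝ, MeasurableSet B → B ⊆ ({0} : Set ℝ)ᶜ → volume B = 0 →
      volume (f ⁻¹' B) = 0)
    (μ : Measure ℝ)
    (hμ : ∀ B : Set ℝ, MeasurableSet B →
      μ B = ∫⁻ s in {s : ℝ | 0 ≤ s ∧ ENNReal.ofReal s < t},
        ν {x : ℝ | f s * x ∈ B \ {0}} ∂volume) :
    ∀ B : Set ℝ, MeasurableSet B → volume B = 0 → μ B = 0 := by
  intro B hB hBvol
  rw [hμ B hB]
  set S : Set ℝ := {s : ℝ | 0 ≤ s ∧ ENNReal.ofReal s < t} with hS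
  have hN : MeasurableSet (B \ {0}) := hB.diff (measurableSet_singleton 0)
  have hNvol : volume (B \ {0}) = 0 :=
    le_antisymm ((measure_mono Set.diff_subset).trans hBvol.le) zero_le'
  -- the big product set
  have hmeas : MeasurableSet {p : ℝ × ℝ | f p.1 * p.2 ∈ B \ {0}} :=
    ((hf.comp measurable_fst).mul measurable_snd) hN
  set g : ℝ → ℝ → ℝ≥0∞ := fun s x =>
    Set.indicator {p : ℝ × ℝ | f p.1 * p.2 ∈ B \ {0}} (fun _ => 1) (s, x) with hg
  have hsection : ∀ s : ℝ, MeasurableSet {x : ℝ | f s * x ∈ B \ {0}} := fun s =>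
    ((measurable_const.mul measurable_id).comp measurable_id) hN
  have h1 : ∀ s : ℝ, ν {x : ℝ | f s * x ∈ B \ {0}} = ∫⁻ x, g s x ∂ν := by
    intro s
    rw [← lintegral_indicator_one (hsection s)]
    rfl
  have hgm : AEMeasurable (Function.uncurry g) ((volume.restrict S).prod ν) := by
    apply Measurable.aemeasurable
    have : Function.uncurry g =
        Set.indicator {p : ℝ × ℝ | f p.1 * p.2 ∈ B \ {0}} (fun _ => (1 : ℝ≥0∞)) := rfl
    rw [this]
    exact measurable_const.indicator hmeas
  calc ∫⁻ s in S, ν {x : ℝ | f s * x ∈ B \ {0}} ∂volume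
      = ∫⁻ s in S, ∫⁻ x, g s x ∂ν ∂volume := by simp_rw [h1]
    _ = ∫⁻ x, ∫⁻ s in S, g s x ∂volume ∂ν := lintegral_lintegral_swap hgm
    _ = 0 := by
        rw [← lintegral_zero (μ := ν)]
        apply lintegral_congr
        intro x
        have hsx : MeasurableSet {s : ℝ | f s * x ∈ B \ {0}} :=
          (hf.mul measurable_const) hN
        have hx1 : ∀ s : ℝ, g s x =
            Set.indicator {s : ℝ | f s * x ∈ B \ {0}} (fun _ => (1:ℝ≥0∞)) s := by
          intro s
          rfl
        have : ∫⁻ s in S, g s x ∂volume = (volume.restrict S) {s : ℝ | f s * x ∈ B \ {0}} := by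
          simp_rw [hx1]
          exact lintegral_indicator_one hsx
        rw [this]
        rcases eq_or_ne x 0 with rfl | hx
        · have : {s : ℝ | f s * (0:ℝ) ∈ B \ {0}} = ∅ := by
            ext s; simp
          simp [this]
        · have hCsub : {y : ℝ | y * x ∈ B \ {0}} ⊆ ({0} : Set ℝ)ᶜ := by
            intro y hy h0
            simp only [Set.mem_singleton_iff] at h0
            subst h0
            simp at hy
          have hCmeas : MeasurableSet {y : ℝ | y * x ∈ B \ {0}} :=
            (measurable_mul_const x) hN
          have hCvol : volume {y : ℝ | y * x ∈ B \ {0}} = 0 := by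
            have := Real.volume_preimage_mul_right hx (B \ {0})
            simpa [Set.preimage, hNvol] using this
          have hpre : volume (f ⁻¹' {y : ℝ | y * x ∈ B \ {0}}) = 0 :=
            hLusin _ hCmeas hCsub hCvol
          have : {s : ℝ | f s * x ∈ B \ {0}} = f ⁻¹' {y : ℝ | y * x ∈ B \ {0}} := rfl
          rw [this]
          exact le_antisymm ((Measure.restrict_apply_le _ _).trans hpre.le) zero_le'
end

section
/- Let ν be a Borel measure on ℝ with ν({0}) = 0 and ∫_ℝ min(1, x²) ν(dx) < ∞, let t ∈ (0,∞), and let f : [0,t] → ℝ be bounded and Borel measurable with λ¹({s ∈ [0,t] : f(s) ≠ 0}) > 0. Then ∫_{[-1,1]} |y| ν_{f,t}(dy) < ∞ if and only if ∫_{[-1,1]} |x| ν(dx) < ∞. -/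
open MeasureTheory
open scoped ENNReal

open MeasureTheory
open scoped ENNReal

-- annulus finiteness
lemma annulus_finite (ν : Measure ℝ)
    (hLevy : ∫⁻ x, ENNReal.ofReal (min 1 (x ^ 2)) ∂ν < ∞)
    {a : ℝ} (ha : 0 < a) : ν {x : ℝ | a ≤ |x|} < ∞ := by
  have hmeas : MeasurableSet {x : ℝ | a ≤ |x|} :=
    measurableSet_le measurable_const measurable_norm
  have hlb : ENNReal.ofReal (min 1 (a ^ 2)) * ν {x : ℝ | a ≤ |x|}
      ≤ ∫⁻ x, ENNReal.ofReal (min 1 (x ^ 2)) ∂ν := by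
    rw [← setLIntegral_const]
    refine le_trans (setLIntegral_mono (by fun_prop) ?_) (setLIntegral_le_lintegral _ _)
    intro x hx
    refine ENNReal.ofReal_le_ofReal ?_
    have : a ^ 2 ≤ x ^ 2 := by
      have h1 : a ≤ |x| := hx
      nlinarith [sq_abs x, abs_nonneg x, ha.le]
    exact min_le_min le_rfl this
  have hpos : 0 < ENNReal.ofReal (min 1 (a ^ 2)) := by
    rw [ENNReal.ofReal_pos]
    exact lt_min one_pos (by positivity)
  by_contra h
  rw [not_lt, top_le_iff] at h
  rw [h, ENNReal.mul_top hpos.ne'] at hlb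
  exact absurd (top_le_iff.mp hlb) hLevy.ne

lemma nu_sigmaFinite (ν : Measure ℝ)
    (hν0 : ν ({0} : Set ℝ) = 0)
    (hLevy : ∫⁻ x, ENNReal.ofReal (min 1 (x ^ 2)) ∂ν < ∞) : SigmaFinite ν := by
  refine ⟨⟨⟨fun n => {x : ℝ | 1 / (n + 1 : ℝ) ≤ |x|} ∪ {0}, fun _ => trivial, fun n => ?_, ?_⟩⟩⟩
  · refine lt_of_le_of_lt (measure_union_le _ _) ?_
    have h1 : ν {x : ℝ | 1 / (n + 1 : ℝ) ≤ |x|} < ∞ := by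
      exact annulus_finite ν hLevy (by positivity)
    have h2 : ν ({0} : Set ℝ) < ∞ := by rw [hν0]; exact ENNReal.zero_lt_top
    exact ENNReal.add_lt_top.mpr ⟨h1, h2⟩
  · refine Set.eq_univ_of_forall fun x => ?_
    rw [Set.mem_iUnion]
    by_cases hx : x = 0
    · exact ⟨0, Or.inr (by simp [hx])⟩
    · obtain ⟨n, hn⟩ := exists_nat_one_div_lt (abs_pos.mpr hx)
      exact ⟨n, Or.inl hn.le⟩


noncomputable def hfun : ℝ → ℝ≥0∞ := (Set.Icc (-1:ℝ) 1).indicator fun y => ENNReal.ofReal |y|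

lemma hfun_meas : Measurable hfun := by
  unfold hfun
  exact Measurable.indicator (by fun_prop) measurableSet_Icc

lemma hfun_zero : hfun 0 = 0 := by simp [hfun]

lemma key_repr (ν : Measure ℝ) [SigmaFinite ν]
    (t : ℝ)
    (f : ℝ → ℝ) (hf : Measurable f)
    (μ : Measure ℝ)
    (hμ : ∀ B : Set ℝ, MeasurableSet B →
      μ B = ∫⁻ s in Set.Icc (0 : ℝ) t, ν {x : ℝ | f s * x ∈ B \ {0}} ∂volume) :
    ∫⁻ y, hfun y ∂μ = ∫⁻ s in Set.Icc (0 : ℝ) t, ∫⁻ x, hfun (f s * x) ∂ν ∂volume := by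
  set κ : ℝ → Measure ℝ := fun s => (ν.map (f s * ·)).restrict ({0}ᶜ) with hκ
  have hκB : ∀ B : Set ℝ, MeasurableSet B → ∀ s, κ s B = ν {x : ℝ | f s * x ∈ B \ {0}} := by
    intro B hB s
    rw [hκ]
    simp only
    rw [Measure.restrict_apply hB,
      Measure.map_apply (measurable_const_mul (f s)) (hB.inter (measurableSet_singleton 0).compl)]
    rfl
  have hκmeas : Measurable κ := by
    refine Measure.measurable_of_measurable_coe _ fun B hB => ?_
    simp_rw [hκB B hB]
    have hD : MeasurableSet {p : ℝ × ℝ | f p.1 * p.2 ∈ B \ {0}} :=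
      ((hf.comp measurable_fst).mul measurable_snd)
        (hB.diff (measurableSet_singleton 0))
    have h1 : ∀ s : ℝ, ν {x : ℝ | f s * x ∈ B \ {0}}
        = ∫⁻ x, Set.indicator {p : ℝ × ℝ | f p.1 * p.2 ∈ B \ {0}} 1 (s, x) ∂ν := by
      intro s
      have hsec : MeasurableSet {x : ℝ | f s * x ∈ B \ {0}} :=
        (measurable_const_mul (f s)) (hB.diff (measurableSet_singleton 0))
      rw [← lintegral_indicator_one hsec]
      congr 1
    simp_rw [h1]
    exact (measurable_one.indicator hD).lintegral_prod_right'
  have hμbind : μ = (volume.restrict (Set.Icc (0:ℝ) t)).bind κ := by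
    ext B hB
    rw [hμ B hB, Measure.bind_apply hB hκmeas.aemeasurable]
    exact lintegral_congr fun s => (hκB B hB s).symm
  rw [hμbind, Measure.lintegral_bind hκmeas.aemeasurable hfun_meas.aemeasurable]
  refine lintegral_congr fun s => ?_
  have hind : ({0}ᶜ : Set ℝ).indicator hfun = hfun := by
    funext y
    by_cases hy : y = 0
    · simp [hy, hfun_zero]
    · rw [Set.indicator_of_mem (by simpa using hy)]
  calc ∫⁻ y, hfun y ∂(κ s)
      = ∫⁻ y, ({0}ᶜ : Set ℝ).indicator hfun y ∂(ν.map (f s * ·)) := by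
        rw [hκ]; simp only
        rw [lintegral_indicator (measurableSet_singleton 0).compl]
    _ = ∫⁻ y, hfun y ∂(ν.map (f s * ·)) := by rw [hind]
    _ = ∫⁻ x, hfun (f s * x) ∂ν := lintegral_map hfun_meas (measurable_const_mul (f s))

lemma hfun_of_mem {y : ℝ} (hy : |y| ≤ 1) : hfun y = ENNReal.ofReal |y| := by
  rw [hfun, Set.indicator_of_mem]
  rw [Set.mem_Icc, ← abs_le]; exact hy

lemma hfun_le (y : ℝ) : hfun y ≤ ENNReal.ofReal |y| := by
  by_cases hy : y ∈ Set.Icc (-1:ℝ) 1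
  · rw [hfun, Set.indicator_of_mem hy]
  · rw [hfun, Set.indicator_of_notMem hy]; exact zero_le

lemma hfun_le_one (y : ℝ) : hfun y ≤ 1 := by
  by_cases hy : y ∈ Set.Icc (-1:ℝ) 1
  · rw [hfun, Set.indicator_of_mem hy]
    exact ENNReal.ofReal_le_one.mpr (abs_le.mpr (Set.mem_Icc.mp hy))
  · rw [hfun, Set.indicator_of_notMem hy]; exact zero_le

/-- Let `ν` be a Lévy measure on `ℝ` (i.e. `ν {0} = 0` and
`∫ min(1, x²) ν(dx) < ∞`), `t ∈ (0,∞)`, and let `f : [0,t] → ℝ` be bounded and Borel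
measurable with `λ¹ {s ∈ [0,t] : f s ≠ 0} > 0`. With `ν_{f,t}` defined by
`ν_{f,t}(B) = ∫_0^t ν {x | f s * x ∈ B \ {0}} ds`, one has
`∫_{[-1,1]} |y| ν_{f,t}(dy) < ∞` if and only if `∫_{[-1,1]} |x| ν(dx) < ∞`. -/
theorem stmt4
    (ν : Measure ℝ) (hν0 : ν ({0} : Set ℝ) = 0)
    (hLevy : ∫⁻ x, ENNReal.ofReal (min 1 (x ^ 2)) ∂ν < ∞)
    (t : ℝ) (ht : 0 < t)
    (f : ℝ → ℝ) (hf : Measurable f)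
    (hbd : ∃ C : ℝ, ∀ s ∈ Set.Icc (0 : ℝ) t, |f s| ≤ C)
    (hpos : 0 < volume {s : ℝ | s ∈ Set.Icc (0 : ℝ) t ∧ f s ≠ 0})
    (μ : Measure ℝ)
    (hμ : ∀ B : Set ℝ, MeasurableSet B →
      μ B = ∫⁻ s in Set.Icc (0 : ℝ) t, ν {x : ℝ | f s * x ∈ B \ {0}} ∂volume) :
    (∫⁻ y in Set.Icc (-1 : ℝ) 1, ENNReal.ofReal |y| ∂μ) < ∞ ↔
      (∫⁻ x in Set.Icc (-1 : ℝ) 1, ENNReal.ofReal |x| ∂ν) < ∞ := by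
  haveI : SigmaFinite ν := nu_sigmaFinite ν hν0 hLevy
  have key_repr := key_repr ν t f hf μ hμ
  have annulus : ∀ a : ℝ, 0 < a → ν {x : ℝ | a ≤ |x|} < ∞ :=
    fun a ha => annulus_finite ν hLevy ha
  have hfun_meas := hfun_meas
  obtain ⟨C, hC⟩ := hbd
  have habs : Measurable fun x : ℝ => |x| := by fun_prop
  -- there is a point with f ≠ 0
  obtain ⟨s₀, hs₀t, hs₀⟩ : ∃ s, s ∈ Set.Icc (0:ℝ) t ∧ f s ≠ 0 := by
    obtain ⟨s, hs⟩ := nonempty_of_measure_ne_zero hpos.ne'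
    exact ⟨s, hs.1, hs.2⟩
  have hC0 : 0 < C := lt_of_lt_of_le (abs_pos.mpr hs₀) (hC s₀ hs₀t)
  have hLμ : (∫⁻ y in Set.Icc (-1 : ℝ) 1, ENNReal.ofReal |y| ∂μ) = ∫⁻ y, hfun y ∂μ :=
    (lintegral_indicator measurableSet_Icc _).symm
  have hLν : (∫⁻ x in Set.Icc (-1 : ℝ) 1, ENNReal.ofReal |x| ∂ν) = ∫⁻ x, hfun x ∂ν :=
    (lintegral_indicator measurableSet_Icc _).symm
  have hMinner : Measurable fun s => ∫⁻ x, hfun (f s * x) ∂ν :=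
    (hfun_meas.comp ((hf.comp measurable_fst).mul measurable_snd)).lintegral_prod_right'
  rw [hLμ, hLν, key_repr]
  set I := ∫⁻ x, hfun x ∂ν with hI
  set A := ν {x : ℝ | (1:ℝ) ≤ |x|} with hA
  have hAfin : A < ∞ := annulus 1 one_pos
  constructor
  · -- LHS finite ⇒ I finite : contrapose
    intro hL
    by_contra hInf
    rw [not_lt, top_le_iff] at hInf
    -- choose a
    set a := min 1 (1/C) with ha
    have ha0 : 0 < a := lt_min one_pos (by positivity)
    have ha1 : a ≤ 1 := min_le_left _ _
    have haC : C * a ≤ 1 := by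
      calc C * a ≤ C * (1/C) := by
            exact mul_le_mul_of_nonneg_left (min_le_right _ _) hC0.le
        _ = 1 := by field_simp
    -- J = ∞
    set J := ∫⁻ x in {x : ℝ | |x| ≤ a}, ENNReal.ofReal |x| ∂ν with hJ
    have hJtop : J = ∞ := by
      by_contra hJfin
      have hsplit : I ≤ J + ν {x : ℝ | a ≤ |x|} := by
        have : ∀ x : ℝ, hfun x ≤ {x : ℝ | |x| ≤ a}.indicator (fun x => ENNReal.ofReal |x|) x
            + {x : ℝ | a ≤ |x|}.indicator 1 x := by
          intro x
          by_cases hx : |x| ≤ a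
          · refine le_trans (hfun_le x) (le_trans ?_ le_self_add)
            exact (Set.indicator_of_mem (show x ∈ {x : ℝ | |x| ≤ a} from hx) (fun x => ENNReal.ofReal |x|)).ge
          · refine le_trans (hfun_le_one x) (le_trans ?_ le_add_self)
            have h9 := Set.indicator_of_mem
              (show x ∈ {x : ℝ | a ≤ |x|} from le_of_not_ge hx) (1 : ℝ → ℝ≥0∞)
            simp only [Pi.one_apply] at h9
            exact h9.ge
        calc I ≤ ∫⁻ x, ({x : ℝ | |x| ≤ a}.indicator (fun x => ENNReal.ofReal |x|) x
              + {x : ℝ | a ≤ |x|}.indicator 1 x) ∂ν := lintegral_mono this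
          _ = J + ν {x : ℝ | a ≤ |x|} := by
              rw [lintegral_add_left (Measurable.indicator (by fun_prop)
                (measurableSet_le habs measurable_const))]
              congr 1
              · exact lintegral_indicator (measurableSet_le habs measurable_const) _
              · exact lintegral_indicator_one (measurableSet_le measurable_const habs)
      rw [hInf] at hsplit
      have : (⊤ : ℝ≥0∞) < ⊤ :=
        lt_of_le_of_lt hsplit (ENNReal.add_lt_top.mpr ⟨lt_top_iff_ne_top.mpr hJfin, annulus a ha0⟩)
      exact this.false
    -- inner integral infinite on S
    have hinner : ∀ s ∈ {s : ℝ | s ∈ Set.Icc (0:ℝ) t ∧ f s ≠ 0},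
        (∫⁻ x, hfun (f s * x) ∂ν) = ∞ := by
      intro s hs
      have hfs : 0 < |f s| := abs_pos.mpr hs.2
      have hfsC : |f s| ≤ C := hC s hs.1
      have hptwise : ∀ x ∈ {x : ℝ | |x| ≤ a}, ENNReal.ofReal |f s| * ENNReal.ofReal |x|
          ≤ hfun (f s * x) := by
        intro x hx
        have habs : |f s * x| ≤ 1 := by
          rw [abs_mul]
          calc |f s| * |x| ≤ C * a :=
                mul_le_mul hfsC hx (abs_nonneg x) hC0.le
            _ ≤ 1 := haC
        rw [hfun_of_mem habs, abs_mul, ENNReal.ofReal_mul (abs_nonneg _)]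
      have h1 : ENNReal.ofReal |f s| * J ≤ ∫⁻ x, hfun (f s * x) ∂ν := by
        calc ENNReal.ofReal |f s| * J
            = ∫⁻ x in {x : ℝ | |x| ≤ a}, ENNReal.ofReal |f s| * ENNReal.ofReal |x| ∂ν := by
              rw [hJ, lintegral_const_mul _ (by fun_prop)]
          _ ≤ ∫⁻ x in {x : ℝ | |x| ≤ a}, hfun (f s * x) ∂ν :=
              setLIntegral_mono (hfun_meas.comp (measurable_const_mul _)) hptwise
          _ ≤ ∫⁻ x, hfun (f s * x) ∂ν := setLIntegral_le_lintegral _ _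
      rw [hJtop, ENNReal.mul_top (by simpa [ENNReal.ofReal_pos] using hfs : ENNReal.ofReal |f s| ≠ 0)] at h1
      exact top_le_iff.mp h1
    -- conclude LHS = ∞
    have hSmeas : MeasurableSet {s : ℝ | s ∈ Set.Icc (0:ℝ) t ∧ f s ≠ 0} := by
      have : {s : ℝ | s ∈ Set.Icc (0:ℝ) t ∧ f s ≠ 0}
          = Set.Icc (0:ℝ) t ∩ f ⁻¹' ({0}ᶜ) := rfl
      rw [this]
      exact measurableSet_Icc.inter (hf (measurableSet_singleton 0).compl)
    have hbig : (⊤ : ℝ≥0∞) ≤ ∫⁻ s in Set.Icc (0:ℝ) t, ∫⁻ x, hfun (f s * x) ∂ν ∂volume := by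
      calc (⊤ : ℝ≥0∞) = ⊤ * volume {s : ℝ | s ∈ Set.Icc (0:ℝ) t ∧ f s ≠ 0} := by
            rw [ENNReal.top_mul hpos.ne']
        _ = ∫⁻ _ in {s : ℝ | s ∈ Set.Icc (0:ℝ) t ∧ f s ≠ 0}, (⊤ : ℝ≥0∞) ∂volume := by
            rw [setLIntegral_const]
        _ ≤ ∫⁻ s in {s : ℝ | s ∈ Set.Icc (0:ℝ) t ∧ f s ≠ 0},
              ∫⁻ x, hfun (f s * x) ∂ν ∂volume :=
            setLIntegral_mono hMinner (fun s hs => (hinner s hs).symm.le)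
        _ ≤ ∫⁻ s in Set.Icc (0:ℝ) t, ∫⁻ x, hfun (f s * x) ∂ν ∂volume :=
            lintegral_mono_set (fun s hs => hs.1)
    rw [top_le_iff.mp hbig] at hL
    exact hL.false
  · -- I finite ⇒ LHS finite
    intro hIfin
    have hbound : ∀ s ∈ Set.Icc (0:ℝ) t,
        (∫⁻ x, hfun (f s * x) ∂ν) ≤ ENNReal.ofReal C * I + A := by
      intro s hs
      have hfsC : |f s| ≤ C := hC s hs
      have hptwise : ∀ x : ℝ, hfun (f s * x)
          ≤ ENNReal.ofReal C * hfun x + {x : ℝ | (1:ℝ) ≤ |x|}.indicator 1 x := by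
        intro x
        by_cases hx : |x| ≤ 1
        · refine le_trans ?_ le_self_add
          rw [hfun_of_mem hx]
          refine le_trans (hfun_le _) ?_
          rw [abs_mul, ENNReal.ofReal_mul' (abs_nonneg x)]
          exact mul_le_mul_left (ENNReal.ofReal_le_ofReal hfsC) _
        · refine le_trans (hfun_le_one _) (le_trans ?_ le_add_self)
          have h9 := Set.indicator_of_mem
            (show x ∈ {x : ℝ | (1:ℝ) ≤ |x|} from le_of_not_ge hx) (1 : ℝ → ℝ≥0∞)
          simp only [Pi.one_apply] at h9
          exact h9.ge
      calc (∫⁻ x, hfun (f s * x) ∂ν)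
          ≤ ∫⁻ x, (ENNReal.ofReal C * hfun x + {x : ℝ | (1:ℝ) ≤ |x|}.indicator 1 x) ∂ν :=
            lintegral_mono hptwise
        _ = ENNReal.ofReal C * I + A := by
            rw [lintegral_add_left (hfun_meas.const_mul _), lintegral_const_mul _ hfun_meas,
              hI, hA]
            congr 1
            exact lintegral_indicator_one (measurableSet_le measurable_const habs)
    calc ∫⁻ s in Set.Icc (0:ℝ) t, ∫⁻ x, hfun (f s * x) ∂ν ∂volume
        ≤ ∫⁻ _ in Set.Icc (0:ℝ) t, (ENNReal.ofReal C * I + A) ∂volume :=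
          setLIntegral_mono measurable_const hbound
      _ = (ENNReal.ofReal C * I + A) * volume (Set.Icc (0:ℝ) t) := setLIntegral_const _ _
      _ < ∞ := by
          refine ENNReal.mul_lt_top ?_ ?_
          · exact ENNReal.add_lt_top.mpr ⟨ENNReal.mul_lt_top ENNReal.ofReal_lt_top hIfin, hAfin⟩
          · rw [Real.volume_Icc]; exact ENNReal.ofReal_lt_top
end

section
/- Let ν be a Borel measure on ℝ with ν({0}) = 0, ∫_{[-1,1]} |x| ν(dx) < ∞ and ν(ℝ \ [-1,1]) < ∞, let γ ∈ ℝ, let t ∈ (0,∞), and let f : [0,t] → ℝ be bounded and Borel measurable. Define γ_{f,t} = ∫_0^t [ f(s)γ + ∫_ℝ f(s)x ( 1_{{|f(s)x| ≤ 1}} − 1_{{|x| ≤ 1}} ) ν(dx) ] ds. Then all integrals involved are finite and γ_{f,t} − ∫_{[-1,1]} y ν_{f,t}(dy) = ( γ − ∫_{[-1,1]} x ν(dx) ) · ∫_0^t f(s) ds. -/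
open MeasureTheory
open scoped ENNReal

/-- Let `ν` be a Borel measure on `ℝ` with `ν {0} = 0`,
`∫_{[-1,1]} |x| ν(dx) < ∞` and `ν(ℝ \ [-1,1]) < ∞`, let `γ ∈ ℝ`, `t ∈ (0,∞)`, and let
`f : [0,t] → ℝ` be bounded and Borel measurable. With `ν_{f,t}` defined by
`ν_{f,t}(B) = ∫_0^t ν {x | f s * x ∈ B \ {0}} ds` and
`γ_{f,t} = ∫_0^t [f s * γ + ∫ f s * x (1_{|f s * x| ≤ 1} - 1_{|x| ≤ 1}) ν(dx)] ds`,
all the integrals involved are finite and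
`γ_{f,t} - ∫_{[-1,1]} y ν_{f,t}(dy) = (γ - ∫_{[-1,1]} x ν(dx)) * ∫_0^t f s ds`. -/
theorem stmt5
    (ν : Measure ℝ) (hν0 : ν ({0} : Set ℝ) = 0)
    (hfin1 : ∫⁻ x in Set.Icc (-1 : ℝ) 1, ENNReal.ofReal |x| ∂ν < ∞)
    (hfin2 : ν ((Set.Icc (-1 : ℝ) 1)ᶜ) < ∞)
    (γ : ℝ) (t : ℝ) (ht : 0 < t)
    (f : ℝ → ℝ) (hf : Measurable f)
    (hbd : ∃ C : ℝ, ∀ s ∈ Set.Icc (0 : ℝ) t, |f s| ≤ C)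
    (μ : Measure ℝ)
    (hμ : ∀ B : Set ℝ, MeasurableSet B →
      μ B = ∫⁻ s in Set.Icc (0 : ℝ) t, ν {x : ℝ | f s * x ∈ B \ {0}} ∂volume) :
    (∀ s ∈ Set.Icc (0 : ℝ) t,
        Integrable (fun x : ℝ => f s * x *
          ((if |f s * x| ≤ 1 then (1 : ℝ) else 0) - (if |x| ≤ 1 then (1 : ℝ) else 0))) ν)
    ∧ IntegrableOn (fun s : ℝ => f s * γ +
        ∫ x, f s * x *
          ((if |f s * x| ≤ 1 then (1 : ℝ) else 0) - (if |x| ≤ 1 then (1 : ℝ) else 0)) ∂ν)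
        (Set.Icc (0 : ℝ) t) volume
    ∧ IntegrableOn f (Set.Icc (0 : ℝ) t) volume
    ∧ IntegrableOn (fun x : ℝ => x) (Set.Icc (-1 : ℝ) 1) ν
    ∧ Integrable (fun y : ℝ => y) (μ.restrict (Set.Icc (-1 : ℝ) 1))
    ∧ (∫ s in Set.Icc (0 : ℝ) t, (f s * γ +
          ∫ x, f s * x *
            ((if |f s * x| ≤ 1 then (1 : ℝ) else 0) - (if |x| ≤ 1 then (1 : ℝ) else 0)) ∂ν))
        - ∫ y in Set.Icc (-1 : ℝ) 1, y ∂μ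
      = (γ - ∫ x in Set.Icc (-1 : ℝ) 1, x ∂ν) * ∫ s in Set.Icc (0 : ℝ) t, f s := by
  classical
  obtain ⟨C₀, hC₀⟩ := hbd
  set C : ℝ := max C₀ 0 with hCdef
  have hC0 : (0 : ℝ) ≤ C := le_max_right _ _
  have hC : ∀ s ∈ Set.Icc (0 : ℝ) t, |f s| ≤ C :=
    fun s hs => (hC₀ s hs).trans (le_max_left _ _)
  set S : Set ℝ := Set.Icc (-1 : ℝ) 1 with hSdef
  have hSm : MeasurableSet S := measurableSet_Icc
  have hItm : MeasurableSet (Set.Icc (0 : ℝ) t) := measurableSet_Icc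
  have hmemS : ∀ y : ℝ, y ∈ S ↔ |y| ≤ 1 := by
    intro y; rw [hSdef, Set.mem_Icc]; exact (abs_le).symm
  -- σ-finiteness of ν
  haveI hsig : SigmaFinite ν := by
    refine ⟨⟨⟨fun n => {0} ∪ {x : ℝ | 1 / (n + 1) ≤ |x|}, fun _ => Set.mem_univ _, ?_, ?_⟩⟩⟩
    · intro n
      have hcn : (0 : ℝ) < 1 / (n + 1) := by positivity
      have hAm : MeasurableSet {x : ℝ | 1 / (n + 1 : ℝ) ≤ |x|} :=
        measurableSet_le measurable_const measurable_abs
      have h1 : ν ({x : ℝ | 1 / (n + 1 : ℝ) ≤ |x|} ∩ S) < ∞ := by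
        have key := mul_meas_ge_le_lintegral₀ (μ := ν.restrict S)
          (f := fun x => ENNReal.ofReal |x|)
          (ENNReal.measurable_ofReal.comp measurable_abs).aemeasurable
          (ENNReal.ofReal (1 / (n + 1)))
        have hseteq : {x : ℝ | ENNReal.ofReal (1 / (n + 1 : ℝ)) ≤ ENNReal.ofReal |x|}
            = {x : ℝ | 1 / (n + 1 : ℝ) ≤ |x|} := by
          ext x
          simp [ENNReal.ofReal_le_ofReal_iff (abs_nonneg x)]
        rw [hseteq, Measure.restrict_apply hAm] at key
        have hne : ENNReal.ofReal (1 / (n + 1 : ℝ)) ≠ 0 :=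
          ne_of_gt (ENNReal.ofReal_pos.mpr hcn)
        by_contra hcon
        push_neg at hcon
        have heq : ν ({x : ℝ | 1 / (n + 1 : ℝ) ≤ |x|} ∩ S) = ∞ := top_le_iff.mp hcon
        rw [heq, ENNReal.mul_top hne] at key
        exact absurd (lt_of_le_of_lt key hfin1) (lt_irrefl _)
      have h2 : ν ({x : ℝ | 1 / (n + 1 : ℝ) ≤ |x|}) < ∞ := by
        have hsub : {x : ℝ | 1 / (n + 1 : ℝ) ≤ |x|}
            ⊆ ({x : ℝ | 1 / (n + 1 : ℝ) ≤ |x|} ∩ S) ∪ Sᶜ := by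
          intro x hx
          by_cases hxS : x ∈ S
          · exact Or.inl ⟨hx, hxS⟩
          · exact Or.inr hxS
        calc ν {x : ℝ | 1 / (n + 1 : ℝ) ≤ |x|}
            ≤ ν (({x : ℝ | 1 / (n + 1 : ℝ) ≤ |x|} ∩ S) ∪ Sᶜ) := measure_mono hsub
          _ ≤ ν ({x : ℝ | 1 / (n + 1 : ℝ) ≤ |x|} ∩ S) + ν Sᶜ := measure_union_le _ _
          _ < ∞ := ENNReal.add_lt_top.mpr ⟨h1, hfin2⟩
      calc ν ({0} ∪ {x : ℝ | 1 / (n + 1 : ℝ) ≤ |x|})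
          ≤ ν {0} + ν {x : ℝ | 1 / (n + 1 : ℝ) ≤ |x|} := measure_union_le _ _
        _ < ∞ := by rw [hν0, zero_add]; exact h2
    · ext x
      simp only [Set.mem_iUnion, Set.mem_union, Set.mem_singleton_iff, Set.mem_setOf_eq,
        Set.mem_univ, iff_true]
      by_cases hx : x = 0
      · exact ⟨0, Or.inl hx⟩
      · obtain ⟨n, hn⟩ := exists_nat_one_div_lt (abs_pos.mpr hx)
        exact ⟨n, Or.inr (le_of_lt hn)⟩
  -- abbreviations
  set G : ℝ → ℝ → ℝ := fun s x => f s * x *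
    ((if |f s * x| ≤ 1 then (1 : ℝ) else 0) - (if |x| ≤ 1 then (1 : ℝ) else 0)) with hGdef
  set e : ℝ → ℝ → ℝ := fun s x => f s * x * (if |f s * x| ≤ 1 then (1 : ℝ) else 0) with hedef
  have hmul : Measurable fun p : ℝ × ℝ => f p.1 * p.2 :=
    (hf.comp measurable_fst).mul measurable_snd
  have hGmp : Measurable fun p : ℝ × ℝ => G p.1 p.2 := by
    refine hmul.mul (Measurable.sub ?_ ?_)
    · exact Measurable.ite (measurableSet_le hmul.abs measurable_const)
        measurable_const measurable_const
    · exact Measurable.ite (measurableSet_le measurable_snd.abs measurable_const)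
        measurable_const measurable_const
  have hemp : Measurable fun p : ℝ × ℝ => e p.1 p.2 := by
    refine hmul.mul ?_
    exact Measurable.ite (measurableSet_le hmul.abs measurable_const)
      measurable_const measurable_const
  have hfsx : ∀ s, Measurable fun x : ℝ => f s * x :=
    fun s => measurable_id.const_mul (f s)
  have hGms : ∀ s, Measurable (G s) := by
    intro s
    refine (hfsx s).mul (Measurable.sub ?_ ?_)
    · exact Measurable.ite (measurableSet_le (hfsx s).abs measurable_const)
        measurable_const measurable_const
    · exact Measurable.ite (measurableSet_le measurable_abs measurable_const)
        measurable_const measurable_const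
  have hems : ∀ s, Measurable (e s) := by
    intro s
    refine (hfsx s).mul ?_
    exact Measurable.ite (measurableSet_le (hfsx s).abs measurable_const)
      measurable_const measurable_const
  -- the dominating function
  set Hr : ℝ → ℝ := fun x => S.indicator (fun x => C * |x|) x
    + Sᶜ.indicator (fun _ => (1 : ℝ)) x with hHrdef
  have hHr1 : ∀ x : ℝ, |x| ≤ 1 → Hr x = C * |x| := by
    intro x hx
    have hxS : x ∈ S := (hmemS x).mpr hx
    simp only [hHrdef]
    rw [Set.indicator_of_mem hxS, Set.indicator_of_notMem (Set.notMem_compl_iff.mpr hxS),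
      add_zero]
  have hHr2 : ∀ x : ℝ, ¬ |x| ≤ 1 → Hr x = 1 := by
    intro x hx
    have hxS : x ∉ S := fun h => hx ((hmemS x).mp h)
    simp only [hHrdef]
    rw [Set.indicator_of_notMem hxS, Set.indicator_of_mem (Set.mem_compl hxS), zero_add]
  have hHrnn : ∀ x : ℝ, 0 ≤ Hr x := by
    intro x
    by_cases hx : |x| ≤ 1
    · rw [hHr1 x hx]; positivity
    · rw [hHr2 x hx]; norm_num
  -- integrability of |x| on S w.r.t. ν (goal 4 essentially)
  have hint_x : IntegrableOn (fun x : ℝ => x) S ν := by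
    refine ⟨measurable_id.aestronglyMeasurable, ?_⟩
    rw [hasFiniteIntegral_iff_norm]
    simpa [Real.norm_eq_abs] using hfin1
  have hint_abs : Integrable (fun x : ℝ => |x|) (ν.restrict S) := hint_x.abs
  have hHrInt : Integrable Hr ν := by
    refine Integrable.add ?_ ?_
    · exact (integrable_indicator_iff hSm).mpr (hint_abs.const_mul C)
    · exact (integrable_indicator_iff hSm.compl).mpr
        (integrableOn_const hfin2.ne)
  -- pointwise bounds
  have hbound_e : ∀ s, |f s| ≤ C → ∀ x, |e s x| ≤ Hr x := by
    intro s hCs x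
    rw [hedef]
    by_cases h1 : |f s * x| ≤ 1
    · simp only [if_pos h1, mul_one]
      by_cases hx : |x| ≤ 1
      · rw [hHr1 x hx, abs_mul]
        exact mul_le_mul_of_nonneg_right hCs (abs_nonneg x)
      · rw [hHr2 x hx]; exact h1
    · simp only [if_neg h1, mul_zero, abs_zero]
      exact hHrnn x
  have hbound_G : ∀ s, |f s| ≤ C → ∀ x, |G s x| ≤ Hr x := by
    intro s hCs x
    rw [hGdef]
    by_cases h1 : |f s * x| ≤ 1 <;> by_cases h2 : |x| ≤ 1
    · simp only [if_pos h1, if_pos h2, sub_self, mul_zero, abs_zero]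
      exact hHrnn x
    · simp only [if_pos h1, if_neg h2, sub_zero, mul_one]
      rw [hHr2 x h2]; exact h1
    · simp only [if_neg h1, if_pos h2, zero_sub, mul_neg, mul_one, abs_neg]
      rw [hHr1 x h2, abs_mul]
      exact mul_le_mul_of_nonneg_right hCs (abs_nonneg x)
    · simp only [if_neg h1, if_neg h2, sub_self, mul_zero, abs_zero]
      exact hHrnn x
  -- goal 1
  have part1 : ∀ s ∈ Set.Icc (0 : ℝ) t, Integrable (G s) ν := by
    intro s hs
    refine hHrInt.mono (hGms s).aestronglyMeasurable (ae_of_all _ fun x => ?_)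
    rw [Real.norm_eq_abs, Real.norm_eq_abs]
    exact (hbound_G s (hC s hs) x).trans (le_abs_self _)
  have hInt_e : ∀ s ∈ Set.Icc (0 : ℝ) t, Integrable (e s) ν := by
    intro s hs
    refine hHrInt.mono (hems s).aestronglyMeasurable (ae_of_all _ fun x => ?_)
    rw [Real.norm_eq_abs, Real.norm_eq_abs]
    exact (hbound_e s (hC s hs) x).trans (le_abs_self _)
  -- goal 3
  have part3 : IntegrableOn f (Set.Icc (0 : ℝ) t) volume := by
    refine Integrable.mono' (integrable_const C) hf.aestronglyMeasurable ?_
    rw [ae_restrict_iff' hItm]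
    exact ae_of_all _ fun s hs => by rw [Real.norm_eq_abs]; exact hC s hs
  -- constants
  set KH : ℝ := ∫ x, Hr x ∂ν with hKHdef
  have hA_le : ∀ s ∈ Set.Icc (0 : ℝ) t, |∫ x, G s x ∂ν| ≤ KH := by
    intro s hs
    calc |∫ x, G s x ∂ν| ≤ ∫ x, |G s x| ∂ν := by
          simpa [Real.norm_eq_abs] using norm_integral_le_integral_norm (G s) (μ := ν)
      _ ≤ KH := integral_mono (part1 s hs).abs hHrInt fun x => hbound_G s (hC s hs) x
  have hE_le : ∀ s ∈ Set.Icc (0 : ℝ) t, |∫ x, e s x ∂ν| ≤ KH := by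
    intro s hs
    calc |∫ x, e s x ∂ν| ≤ ∫ x, |e s x| ∂ν := by
          simpa [Real.norm_eq_abs] using norm_integral_le_integral_norm (e s) (μ := ν)
      _ ≤ KH := integral_mono (hInt_e s hs).abs hHrInt fun x => hbound_e s (hC s hs) x
  -- measurability of parametric integrals
  have hAmeas : StronglyMeasurable fun s : ℝ => ∫ x, G s x ∂ν :=
    StronglyMeasurable.integral_prod_right' (hGmp.stronglyMeasurable)
  have hEmeas : StronglyMeasurable fun s : ℝ => ∫ x, e s x ∂ν :=
    StronglyMeasurable.integral_prod_right' (hemp.stronglyMeasurable)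
  -- goal 2
  have part2 : IntegrableOn (fun s : ℝ => f s * γ + ∫ x, G s x ∂ν)
      (Set.Icc (0 : ℝ) t) volume := by
    refine Integrable.mono' (integrable_const (C * |γ| + KH))
      (((hf.mul measurable_const).stronglyMeasurable.add hAmeas).aestronglyMeasurable) ?_
    rw [ae_restrict_iff' hItm]
    refine ae_of_all _ fun s hs => ?_
    rw [Real.norm_eq_abs]
    calc |f s * γ + ∫ x, G s x ∂ν| ≤ |f s * γ| + |∫ x, G s x ∂ν| := abs_add_le _ _
      _ ≤ C * |γ| + KH := by
          refine add_le_add ?_ (hA_le s hs)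
          rw [abs_mul]
          exact mul_le_mul_of_nonneg_right (hC s hs) (abs_nonneg γ)
  have hInt_E : IntegrableOn (fun s : ℝ => ∫ x, e s x ∂ν) (Set.Icc (0 : ℝ) t) volume := by
    refine Integrable.mono' (integrable_const KH) hEmeas.aestronglyMeasurable ?_
    rw [ae_restrict_iff' hItm]
    exact ae_of_all _ fun s hs => by rw [Real.norm_eq_abs]; exact hE_le s hs
  -- the kernel κ and the bind representation of μ
  set T : ℝ → Set ℝ := fun s => {x : ℝ | f s * x ≠ 0} with hTdef
  have hTm : ∀ s, MeasurableSet (T s) := fun s =>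
    (hfsx s) (measurableSet_singleton (0 : ℝ)).compl
  set κ : ℝ → Measure ℝ := fun s => Measure.map (fun x => f s * x) (ν.restrict (T s))
    with hκdef
  have hκapp : ∀ s, ∀ B : Set ℝ, MeasurableSet B →
      κ s B = ν {x : ℝ | f s * x ∈ B \ {0}} := by
    intro s B hB
    rw [hκdef]
    rw [Measure.map_apply (hfsx s) hB, Measure.restrict_apply ((hfsx s) hB)]
    have hseteq : (fun x => f s * x) ⁻¹' B ∩ T s = {x : ℝ | f s * x ∈ B \ {0}} := by
      ext x
      simp [hTdef, Set.mem_diff, and_comm]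
    rw [hseteq]
  have hκmeas : Measurable κ := by
    refine Measure.measurable_of_measurable_coe _ fun B hB => ?_
    have heq : (fun s => κ s B) = fun s =>
        ∫⁻ x, Set.indicator {p : ℝ × ℝ | f p.1 * p.2 ∈ B \ {0}}
          (fun _ => (1 : ℝ≥0∞)) (s, x) ∂ν := by
      funext s
      rw [hκapp s B hB]
      have hsetm : MeasurableSet {x : ℝ | f s * x ∈ B \ {0}} :=
        (hfsx s) (hB.diff (measurableSet_singleton 0))
      rw [← lintegral_indicator_one hsetm]
      refine lintegral_congr fun x => ?_
      by_cases hx : f s * x ∈ B \ {0} <;>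
        simp [Set.indicator_apply, hx]
    rw [heq]
    refine Measurable.lintegral_prod_right' ?_
    exact (measurable_const.indicator (hmul (hB.diff (measurableSet_singleton 0))))
  have hμbind : μ = (volume.restrict (Set.Icc (0 : ℝ) t)).bind κ := by
    ext B hB
    rw [Measure.bind_apply hB hκmeas.aemeasurable, hμ B hB]
    exact lintegral_congr fun s => (hκapp s B hB).symm
  -- key lintegral formula
  have LemA : ∀ h : ℝ → ℝ≥0∞, Measurable h → h 0 = 0 →
      ∫⁻ y, h y ∂μ = ∫⁻ s in Set.Icc (0 : ℝ) t, ∫⁻ x, h (f s * x) ∂ν ∂volume := by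
    intro h hh h0
    rw [hμbind, Measure.lintegral_bind hκmeas.aemeasurable hh.aemeasurable]
    refine lintegral_congr fun s => ?_
    rw [hκdef]
    rw [lintegral_map hh (hfsx s)]
    rw [← lintegral_indicator (hTm s)]
    refine lintegral_congr fun x => ?_
    by_cases hx : x ∈ T s
    · rw [Set.indicator_of_mem hx]
    · rw [Set.indicator_of_notMem hx]
      have hzero : f s * x = 0 := not_not.mp hx
      rw [hzero, h0]
  -- the function φ
  set φ : ℝ → ℝ := fun y => y * (if |y| ≤ 1 then (1 : ℝ) else 0) with hφdef
  have hφm : Measurable φ := by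
    refine measurable_id.mul ?_
    exact Measurable.ite (measurableSet_le measurable_abs measurable_const)
      measurable_const measurable_const
  have hφ0 : φ 0 = 0 := by simp [hφdef]
  have hφind : S.indicator (fun y : ℝ => y) = φ := by
    funext y
    by_cases hy : |y| ≤ 1
    · rw [Set.indicator_of_mem ((hmemS y).mpr hy)]
      simp [hφdef, hy]
    · rw [Set.indicator_of_notMem (fun h => hy ((hmemS y).mp h))]
      simp [hφdef, hy]
  have hφe : ∀ s x, φ (f s * x) = e s x := by intro s x; rfl
  -- ENNReal-valued parametric integrals
  set P : ℝ → ℝ≥0∞ := fun s => ∫⁻ x, ENNReal.ofReal (φ (f s * x)) ∂ν with hPdef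
  set N : ℝ → ℝ≥0∞ := fun s => ∫⁻ x, ENNReal.ofReal (-φ (f s * x)) ∂ν with hNdef
  have hPmeas : Measurable P := by
    rw [hPdef]
    exact Measurable.lintegral_prod_right'
      (ENNReal.measurable_ofReal.comp (hφm.comp hmul))
  have hNmeas : Measurable N := by
    rw [hNdef]
    exact Measurable.lintegral_prod_right'
      (ENNReal.measurable_ofReal.comp ((hφm.comp hmul).neg))
  set KH' : ℝ≥0∞ := ∫⁻ x, ENNReal.ofReal (Hr x) ∂ν with hKH'def
  have hKH'fin : KH' < ∞ := hHrInt.lintegral_lt_top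
  have hbnd_abs : ∀ s ∈ Set.Icc (0 : ℝ) t,
      ∫⁻ x, ENNReal.ofReal |φ (f s * x)| ∂ν ≤ KH' := by
    intro s hs
    refine lintegral_mono fun x => ENNReal.ofReal_le_ofReal ?_
    rw [hφe s x]
    exact hbound_e s (hC s hs) x
  have hPbnd : ∀ s ∈ Set.Icc (0 : ℝ) t, P s ≤ KH' := by
    intro s hs
    refine le_trans ?_ (hbnd_abs s hs)
    exact lintegral_mono fun x => ENNReal.ofReal_le_ofReal (le_abs_self _)
  have hNbnd : ∀ s ∈ Set.Icc (0 : ℝ) t, N s ≤ KH' := by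
    intro s hs
    refine le_trans ?_ (hbnd_abs s hs)
    exact lintegral_mono fun x => ENNReal.ofReal_le_ofReal (neg_le_abs _)
  -- goal 5
  have part5 : Integrable (fun y : ℝ => y) (μ.restrict S) := by
    refine ⟨measurable_id.aestronglyMeasurable, ?_⟩
    rw [hasFiniteIntegral_iff_norm]
    have habs0 : (fun y : ℝ => ENNReal.ofReal |φ y|) 0 = 0 := by simp [hφ0]
    have habsm : Measurable fun y : ℝ => ENNReal.ofReal |φ y| :=
      ENNReal.measurable_ofReal.comp hφm.abs
    have hcongr : ∫⁻ y, ENNReal.ofReal ‖y‖ ∂(μ.restrict S)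
        = ∫⁻ y, ENNReal.ofReal |φ y| ∂μ := by
      rw [← lintegral_indicator hSm]
      refine lintegral_congr fun y => ?_
      by_cases hy : y ∈ S
      · rw [Set.indicator_of_mem hy]
        have : φ y = y := by simp [hφdef, (hmemS y).mp hy]
        rw [this, Real.norm_eq_abs]
      · rw [Set.indicator_of_notMem hy]
        have hφy : φ y = 0 := by
          have : ¬ |y| ≤ 1 := fun h => hy ((hmemS y).mpr h)
          simp [hφdef, this]
        rw [hφy]; simp
    rw [hcongr, LemA _ habsm habs0]
    calc ∫⁻ s in Set.Icc (0 : ℝ) t, ∫⁻ x, ENNReal.ofReal |φ (f s * x)| ∂ν ∂volume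
        ≤ ∫⁻ _ in Set.Icc (0 : ℝ) t, KH' ∂volume :=
          setLIntegral_mono measurable_const fun s hs => hbnd_abs s hs
      _ = KH' * volume (Set.Icc (0 : ℝ) t) := by rw [setLIntegral_const]
      _ < ∞ := ENNReal.mul_lt_top hKH'fin (by simp [Real.volume_Icc] : volume (Set.Icc (0:ℝ) t) < ∞)
  -- identity between ∫ y dμ on S and ∫ E
  have hφint : Integrable φ μ := by
    rw [← hφind]
    exact (integrable_indicator_iff hSm).mpr part5
  have hstep1 : ∫ y in S, y ∂μ = ∫ y, φ y ∂μ := by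
    rw [← integral_indicator hSm, hφind]
  have hstep2 : ∫ y, φ y ∂μ = (∫⁻ y, ENNReal.ofReal (φ y) ∂μ).toReal
      - (∫⁻ y, ENNReal.ofReal (-φ y) ∂μ).toReal :=
    integral_eq_lintegral_pos_part_sub_lintegral_neg_part hφint
  have hstepP : ∫⁻ y, ENNReal.ofReal (φ y) ∂μ = ∫⁻ s in Set.Icc (0 : ℝ) t, P s ∂volume :=
    LemA _ (ENNReal.measurable_ofReal.comp hφm) (by simp [hφ0])
  have hstepN : ∫⁻ y, ENNReal.ofReal (-φ y) ∂μ = ∫⁻ s in Set.Icc (0 : ℝ) t, N s ∂volume :=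
    LemA _ (ENNReal.measurable_ofReal.comp hφm.neg) (by simp [hφ0])
  -- integrating toReal ∘ P
  have hPtoReal : ∫ s in Set.Icc (0 : ℝ) t, (P s).toReal ∂volume
      = (∫⁻ s in Set.Icc (0 : ℝ) t, P s ∂volume).toReal := by
    refine integral_toReal (hPmeas.aemeasurable.restrict) ?_
    rw [ae_restrict_iff' hItm]
    exact ae_of_all _ fun s hs => lt_of_le_of_lt (hPbnd s hs) hKH'fin
  have hNtoReal : ∫ s in Set.Icc (0 : ℝ) t, (N s).toReal ∂volume
      = (∫⁻ s in Set.Icc (0 : ℝ) t, N s ∂volume).toReal := by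
    refine integral_toReal (hNmeas.aemeasurable.restrict) ?_
    rw [ae_restrict_iff' hItm]
    exact ae_of_all _ fun s hs => lt_of_le_of_lt (hNbnd s hs) hKH'fin
  have hPint : IntegrableOn (fun s => (P s).toReal) (Set.Icc (0 : ℝ) t) volume := by
    refine Integrable.mono' (integrable_const KH'.toReal)
      (hPmeas.ennreal_toReal.aestronglyMeasurable) ?_
    rw [ae_restrict_iff' hItm]
    refine ae_of_all _ fun s hs => ?_
    rw [Real.norm_eq_abs, abs_of_nonneg ENNReal.toReal_nonneg]
    exact ENNReal.toReal_mono hKH'fin.ne (hPbnd s hs)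
  have hNint : IntegrableOn (fun s => (N s).toReal) (Set.Icc (0 : ℝ) t) volume := by
    refine Integrable.mono' (integrable_const KH'.toReal)
      (hNmeas.ennreal_toReal.aestronglyMeasurable) ?_
    rw [ae_restrict_iff' hItm]
    refine ae_of_all _ fun s hs => ?_
    rw [Real.norm_eq_abs, abs_of_nonneg ENNReal.toReal_nonneg]
    exact ENNReal.toReal_mono hKH'fin.ne (hNbnd s hs)
  have hEPN : ∫ s in Set.Icc (0 : ℝ) t, (∫ x, e s x ∂ν) ∂volume
      = ∫ s in Set.Icc (0 : ℝ) t, ((P s).toReal - (N s).toReal) ∂volume := by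
    refine setIntegral_congr_fun hItm fun s hs => ?_
    exact integral_eq_lintegral_pos_part_sub_lintegral_neg_part (hInt_e s hs)
  have hkey : ∫ y in S, y ∂μ = ∫ s in Set.Icc (0 : ℝ) t, (∫ x, e s x ∂ν) ∂volume := by
    rw [hstep1, hstep2, hstepP, hstepN, hEPN, integral_sub hPint hNint, hPtoReal, hNtoReal]
  -- algebra with c
  set c : ℝ := ∫ x in S, x ∂ν with hcdef
  have hInt_xS : Integrable (S.indicator fun x : ℝ => x) ν :=
    (integrable_indicator_iff hSm).mpr hint_x
  have hAE : ∀ s ∈ Set.Icc (0 : ℝ) t, (∫ x, e s x ∂ν) - (∫ x, G s x ∂ν) = f s * c := by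
    intro s hs
    rw [← integral_sub (hInt_e s hs) (part1 s hs)]
    have hptw : ∀ x, e s x - G s x = f s * S.indicator (fun x : ℝ => x) x := by
      intro x
      by_cases hx : |x| ≤ 1
      · rw [Set.indicator_of_mem ((hmemS x).mpr hx)]
        simp only [hedef, hGdef, if_pos hx]
        ring
      · rw [Set.indicator_of_notMem (fun h => hx ((hmemS x).mp h))]
        simp only [hedef, hGdef, if_neg hx]
        ring
    calc ∫ x, (e s x - G s x) ∂ν = ∫ x, f s * S.indicator (fun x : ℝ => x) x ∂ν := by
          exact integral_congr_ae (ae_of_all _ hptw)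
      _ = f s * ∫ x, S.indicator (fun x : ℝ => x) x ∂ν := integral_const_mul _ _
      _ = f s * c := by rw [integral_indicator hSm, hcdef]
  -- final computation
  refine ⟨part1, part2, part3, hint_x, part5, ?_⟩
  rw [hkey]
  rw [← integral_sub part2 hInt_E]
  have hfinal : ∫ s in Set.Icc (0 : ℝ) t,
      ((f s * γ + ∫ x, G s x ∂ν) - ∫ x, e s x ∂ν) ∂volume
      = ∫ s in Set.Icc (0 : ℝ) t, (f s * (γ - c)) ∂volume := by
    refine setIntegral_congr_fun hItm fun s hs => ?_
    have := hAE s hs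
    have h2 : (∫ x, G s x ∂ν) - ∫ x, e s x ∂ν = -(f s * c) := by linarith
    calc (f s * γ + ∫ x, G s x ∂ν) - ∫ x, e s x ∂ν
        = f s * γ + ((∫ x, G s x ∂ν) - ∫ x, e s x ∂ν) := by ring
      _ = f s * γ + -(f s * c) := by rw [h2]
      _ = f s * (γ - c) := by ring
  rw [hfinal]
  rw [show (fun s => f s * (γ - c)) = fun s => (γ - c) * f s from funext fun s => mul_comm _ _]
  rw [integral_const_mul]
end

section
/- Let ν be a Borel measure on ℝ with ν({0}) = 0 that is finite on the complement of every neighbourhood of 0, let t ∈ (0,∞), and let f : [0,t] → ℝ be bounded and Borel measurable with λ¹({s ∈ [0,t] : f(s) ≠ 0}) > 0. If ν((−ε, ε)) > 0 for every ε > 0 (i.e., 0 lies in the support of ν), then ν_{f,t}((−ε, ε)) > 0 for every ε > 0 (i.e., 0 lies in the support of ν_{f,t}). -/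
open MeasureTheory
open scoped ENNReal

/-- Let `ν` be a Borel measure on `ℝ` with `ν {0} = 0` that is finite on
the complement of every neighbourhood of `0`, `t ∈ (0,∞)`, and let `f : [0,t] → ℝ` be
bounded and Borel measurable with `λ¹ {s ∈ [0,t] : f s ≠ 0} > 0`. If `ν((-ε,ε)) > 0` for
every `ε > 0`, then `ν_{f,t}((-ε,ε)) > 0` for every `ε > 0`, where
`ν_{f,t}(B) = ∫_0^t ν {x | f s * x ∈ B \ {0}} ds`. -/
theorem stmt6
    (ν : Measure ℝ) (hν0 : ν ({0} : Set ℝ) = 0)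
    (hfin : ∀ ε : ℝ, 0 < ε → ν ((Set.Ioo (-ε) ε)ᶜ) < ∞)
    (t : ℝ) (ht : 0 < t)
    (f : ℝ → ℝ) (hf : Measurable f)
    (hbd : ∃ C : ℝ, ∀ s ∈ Set.Icc (0 : ℝ) t, |f s| ≤ C)
    (hpos : 0 < volume {s : ℝ | s ∈ Set.Icc (0 : ℝ) t ∧ f s ≠ 0})
    (μ : Measure ℝ)
    (hμ : ∀ B : Set ℝ, MeasurableSet B →
      μ B = ∫⁻ s in Set.Icc (0 : ℝ) t, ν {x : ℝ | f s * x ∈ B \ {0}} ∂volume)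
    (h0supp : ∀ ε : ℝ, 0 < ε → 0 < ν (Set.Ioo (-ε) ε)) :
    ∀ ε : ℝ, 0 < ε → 0 < μ (Set.Ioo (-ε) ε) := by
  obtain ⟨C, hC⟩ := hbd
  have hCpos : 0 < C := by
    by_contra h
    push_neg at h
    have he : {s : ℝ | s ∈ Set.Icc (0 : ℝ) t ∧ f s ≠ 0} = ∅ := by
      ext s
      simp only [Set.mem_setOf_eq, Set.mem_empty_iff_false, iff_false, not_and, not_not]
      intro hs
      have h1 : |f s| ≤ 0 := (hC s hs).trans h
      exact abs_nonpos_iff.mp h1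
    rw [he] at hpos
    simp at hpos
  intro ε hε
  rw [hμ _ measurableSet_Ioo]
  set δ := ν (Set.Ioo (-(ε / C)) (ε / C)) with hδ
  have hδpos : 0 < δ := h0supp _ (div_pos hε hCpos)
  set A : Set ℝ := Set.Icc (0 : ℝ) t ∩ {s | f s ≠ 0} with hA
  have hAeq : {s : ℝ | s ∈ Set.Icc (0 : ℝ) t ∧ f s ≠ 0} = A := rfl
  have hAmeas : MeasurableSet A :=
    measurableSet_Icc.inter (hf (measurableSet_singleton 0).compl)
  have key : ∀ s ∈ A, δ ≤ ν {x : ℝ | f s * x ∈ Set.Ioo (-ε) ε \ {0}} := by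
    rintro s ⟨hs, hfs⟩
    have hfs : f s ≠ 0 := hfs
    have hsub : Set.Ioo (-(ε / C)) (ε / C) \ {0} ⊆
        {x : ℝ | f s * x ∈ Set.Ioo (-ε) ε \ {0}} := by
      rintro x ⟨hx, hx0⟩
      have hx0' : x ≠ 0 := hx0
      have habs : |x| < ε / C := abs_lt.mpr ⟨hx.1, hx.2⟩
      have hlt : |f s * x| < ε := by
        rw [abs_mul]
        calc |f s| * |x| ≤ C * |x| :=
              mul_le_mul_of_nonneg_right (hC s hs) (abs_nonneg x)
          _ < C * (ε / C) := by
              exact mul_lt_mul_of_pos_left habs hCpos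
          _ = ε := mul_div_cancel₀ ε hCpos.ne'
      refine ⟨abs_lt.mp hlt, ?_⟩
      simp [mul_ne_zero hfs hx0']
    calc δ = ν (Set.Ioo (-(ε / C)) (ε / C) \ {0}) := (measure_diff_null hν0).symm
      _ ≤ _ := measure_mono hsub
  have hlb : δ * volume A ≤
      ∫⁻ s in Set.Icc (0 : ℝ) t, ν {x : ℝ | f s * x ∈ Set.Ioo (-ε) ε \ {0}} ∂volume := by
    have h1 : ∫⁻ s in Set.Icc (0 : ℝ) t, A.indicator (fun _ => δ) s ∂volume ≤
        ∫⁻ s in Set.Icc (0 : ℝ) t, ν {x : ℝ | f s * x ∈ Set.Ioo (-ε) ε \ {0}} ∂volume := by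
      refine lintegral_mono fun s => ?_
      by_cases hsA : s ∈ A
      · simpa [Set.indicator_of_mem hsA] using key s hsA
      · simp [Set.indicator_of_notMem hsA]
    have h2 : ∫⁻ s in Set.Icc (0 : ℝ) t, A.indicator (fun _ => δ) s ∂volume
        = δ * volume A := by
      rw [lintegral_indicator hAmeas, setLIntegral_const,
        Measure.restrict_apply hAmeas,
        Set.inter_eq_left.mpr Set.inter_subset_left]
    rw [← h2]
    exact h1
  refine lt_of_lt_of_le ?_ hlb
  rw [hAeq] at hpos
  exact ENNReal.mul_pos hδpos.ne' hpos.ne'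
end

section
/- Let σ² ≥ 0 and let ν be a Borel measure on ℝ with ν({0}) = 0 and ∫_ℝ min(1, x²) ν(dx) < ∞. Define ψ : ℝ → [0,∞) by ψ(z) = σ²z²/2 + ∫_ℝ (1 − cos(zx)) ν(dx). Then, with values in [0,∞], liminf_{|z|→∞} ψ(z)/log(1+|z|) ≥ 2 · liminf_{ε↓0} ε⁻² |log ε|⁻¹ ( σ² + ∫_{[−ε,ε]} x² ν(dx) ). In particular, if lim_{ε↓0} ε⁻²|log ε|⁻¹(σ² + ∫_{[−ε,ε]} x² ν(dx)) = ∞ (Kallenberg's condition), then lim_{|z|→∞} ψ(z)/log(1+|z|) = ∞ (the Hartman–Wintner condition), and if the liminf on the right-hand side exceeds 1/4, the liminf on the left-hand side exceeds 1/2. -/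
open MeasureTheory Filter
open scoped ENNReal

private lemma stmt7_cos_key {v : ℝ} (hv : |v| ≤ Real.pi) :
    2 / Real.pi ^ 2 * v ^ 2 ≤ 1 - Real.cos v := by
  have := Real.cos_le_one_sub_mul_cos_sq hv
  linarith

set_option maxHeartbeats 1000000 in
/-- Let `σ² ≥ 0` and let `ν` be a Lévy measure on `ℝ`
(`ν {0} = 0`, `∫ min(1,x²) ν(dx) < ∞`). Define
`ψ z = σ² z² / 2 + ∫ (1 - cos (z x)) ν(dx)`. Then, with values in `[0,∞]`,
`liminf_{|z|→∞} ψ z / log (1+|z|) ≥ 2 · liminf_{ε↓0} ε⁻² |log ε|⁻¹ (σ² + ∫_{[-ε,ε]} x² ν(dx))`.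
In particular, Kallenberg's condition implies the Hartman–Wintner condition, and if the
liminf on the right exceeds `1/4`, then the liminf on the left exceeds `1/2`. -/
theorem stmt7
    (σ2 : ℝ) (hσ : 0 ≤ σ2)
    (ν : Measure ℝ) (hν0 : ν ({0} : Set ℝ) = 0)
    (hLevy : ∫⁻ x, ENNReal.ofReal (min 1 (x ^ 2)) ∂ν < ∞)
    (ψ : ℝ → ℝ≥0∞)
    (hψ : ∀ z : ℝ, ψ z = ENNReal.ofReal (σ2 * z ^ 2 / 2)
        + ∫⁻ x, ENNReal.ofReal (1 - Real.cos (z * x)) ∂ν)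
    (K : ℝ → ℝ≥0∞)
    (hK : ∀ ε : ℝ, K ε = ENNReal.ofReal ((ε ^ 2)⁻¹ * |Real.log ε|⁻¹)
        * (ENNReal.ofReal σ2 + ∫⁻ x in Set.Icc (-ε) ε, ENNReal.ofReal (x ^ 2) ∂ν)) :
    2 * liminf K (nhdsWithin (0 : ℝ) (Set.Ioi 0))
        ≤ liminf (fun z : ℝ => ψ z / ENNReal.ofReal (Real.log (1 + |z|)))
            (comap (abs : ℝ → ℝ) atTop)
    ∧ (Tendsto K (nhdsWithin (0 : ℝ) (Set.Ioi 0)) (nhds (⊤ : ℝ≥0∞)) →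
        Tendsto (fun z : ℝ => ψ z / ENNReal.ofReal (Real.log (1 + |z|)))
          (comap (abs : ℝ → ℝ) atTop) (nhds (⊤ : ℝ≥0∞)))
    ∧ ((1 : ℝ≥0∞) / 4 < liminf K (nhdsWithin (0 : ℝ) (Set.Ioi 0)) →
        (1 : ℝ≥0∞) / 2 < liminf (fun z : ℝ => ψ z / ENNReal.ofReal (Real.log (1 + |z|)))
          (comap (abs : ℝ → ℝ) atTop)) := by
  have pi_pos := Real.pi_pos
  have pi_lt_four : Real.pi < 4 := by
    have := Real.pi_lt_d2; linarith
  have main : 2 * liminf K (nhdsWithin (0 : ℝ) (Set.Ioi 0))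
      ≤ liminf (fun z : ℝ => ψ z / ENNReal.ofReal (Real.log (1 + |z|)))
          (comap (abs : ℝ → ℝ) atTop) := by
    refine (le_liminf_iff (by isBoundedDefault) (by isBoundedDefault)).mpr ?_
    intro b hb
    have hbtop : b ≠ ⊤ := (hb.trans_le le_top).ne
    have hb2 : b / 2 < liminf K (nhdsWithin (0 : ℝ) (Set.Ioi 0)) := by
      rw [ENNReal.div_lt_iff (Or.inl two_ne_zero) (Or.inl ENNReal.ofNat_ne_top)]
      rwa [mul_comm] at hb
    obtain ⟨d, hd1, hd2⟩ := exists_between hb2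
    have hd0 : (0 : ℝ≥0∞) < d := zero_le.trans_lt hd1
    have hdtop : d ≠ ⊤ := (hd2.trans_le le_top).ne
    set c : ℝ := d.toReal with hc
    have hc0 : 0 < c := ENNReal.toReal_pos hd0.ne' hdtop
    have hcd : ENNReal.ofReal c = d := ENNReal.ofReal_toReal hdtop
    have hbc : b.toReal < 2 * c := by
      have h1 : b < d * 2 := by
        calc b = b / 2 * 2 := (ENNReal.div_mul_cancel two_ne_zero ENNReal.ofNat_ne_top).symm
          _ < d * 2 := ENNReal.mul_lt_mul_left two_ne_zero ENNReal.ofNat_ne_top hd1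
      have h2 : b < ENNReal.ofReal (2 * c) := by
        rw [ENNReal.ofReal_mul (by norm_num : (0:ℝ) ≤ 2), hcd]
        simpa [mul_comm, ENNReal.ofReal_ofNat] using h1
      exact (ENNReal.lt_ofReal_iff_toReal_lt hbtop).mp h2
    have hbR0 : 0 ≤ b.toReal := ENNReal.toReal_nonneg
    set β : ℝ := (b.toReal + 2 * c) / 2 with hβ
    have hβ0 : 0 < β := by rw [hβ]; linarith
    have hβ2c : β < 2 * c := by rw [hβ]; linarith
    have hbβ : b < ENNReal.ofReal β := by
      rw [← ENNReal.ofReal_toReal hbtop]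
      exact (ENNReal.ofReal_lt_ofReal_iff hβ0).mpr (by rw [hβ]; linarith)
    -- eventual lower bound for K near 0
    have hev : ∀ᶠ ε in nhdsWithin (0:ℝ) (Set.Ioi 0), ENNReal.ofReal c < K ε := by
      rw [hcd]; exact eventually_lt_of_lt_liminf hd2
    obtain ⟨u, hu0, husub⟩ := mem_nhdsGT_iff_exists_Ioc_subset.mp hev
    set ε₁ : ℝ := min u (1/2) with hε₁
    have hε₁0 : 0 < ε₁ := lt_min hu0 (by norm_num)
    have hε₁le : ε₁ ≤ 1/2 := min_le_right _ _
    have hKsmall : ∀ ε : ℝ, 0 < ε → ε ≤ ε₁ → ENNReal.ofReal c < K ε := fun ε h1 h2 =>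
      husub ⟨h1, h2.trans (min_le_left _ _)⟩
    -- threshold
    set R : ℝ := (2*c*Real.log Real.pi + β*Real.log 2)/(2*c - β) with hR
    set Z : ℝ := max (Real.exp R) (max (4/ε₁) 4) with hZ
    have hZev : ∀ᶠ z : ℝ in comap (abs : ℝ → ℝ) atTop, Z ≤ |z| := by
      refine eventually_comap.mpr ?_
      filter_upwards [eventually_ge_atTop Z] with t ht z hz
      rw [hz]; exact ht
    filter_upwards [hZev] with z hz
    have ht4 : (4:ℝ) ≤ |z| := le_trans (le_max_of_le_right (le_max_right _ _)) hz
    have htR : Real.exp R ≤ |z| := le_trans (le_max_left _ _) hz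
    have htε : 4/ε₁ ≤ |z| := le_trans (le_max_of_le_right (le_max_left _ _)) hz
    have ht0 : (0:ℝ) < |z| := by linarith
    set ε : ℝ := Real.pi / |z| with hεdef
    have hε0 : 0 < ε := div_pos pi_pos ht0
    have hεle : ε ≤ ε₁ := by
      have h1 : ε ≤ 4 / |z| := by
        rw [hεdef]; gcongr
      have h2 : (4:ℝ) ≤ |z| * ε₁ := (div_le_iff₀ hε₁0).mp htε
      have h3 : 4 / |z| ≤ ε₁ := (div_le_iff₀ ht0).mpr (by linarith)
      linarith
    have hεlt1 : ε < 1 := lt_of_le_of_lt (hεle.trans hε₁le) (by norm_num)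
    have hlogεneg : Real.log ε < 0 := Real.log_neg hε0 hεlt1
    have hlogε : |Real.log ε| = Real.log (|z| / Real.pi) := by
      rw [abs_of_neg hlogεneg, ← Real.log_inv, hεdef, inv_div]
    -- the set integral and the quantity S
    set J : ℝ≥0∞ := ∫⁻ x in Set.Icc (-ε) ε, ENNReal.ofReal (x ^ 2) ∂ν with hJ
    set S : ℝ≥0∞ := ENNReal.ofReal σ2 + J with hSdef
    -- lower bound for S coming from K
    have hSlow : ENNReal.ofReal (c * (ε^2 * |Real.log ε|)) ≤ S := by
      have hKε := hKsmall ε hε0 hεle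
      rw [hK ε] at hKε
      have hne1 : (ε^2 : ℝ) ≠ 0 := by positivity
      have hne2 : |Real.log ε| ≠ 0 := abs_ne_zero.mpr hlogεneg.ne
      calc ENNReal.ofReal (c * (ε^2*|Real.log ε|))
          = ENNReal.ofReal c * ENNReal.ofReal (ε^2*|Real.log ε|) :=
            ENNReal.ofReal_mul hc0.le
        _ ≤ (ENNReal.ofReal ((ε^2)⁻¹ * |Real.log ε|⁻¹) * S) * ENNReal.ofReal (ε^2*|Real.log ε|) :=
            mul_le_mul_left hKε.le _
        _ = (ENNReal.ofReal ((ε^2)⁻¹*|Real.log ε|⁻¹) * ENNReal.ofReal (ε^2*|Real.log ε|)) * S := by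
            ring
        _ = ENNReal.ofReal (((ε^2)⁻¹*|Real.log ε|⁻¹) * (ε^2*|Real.log ε|)) * S := by
            rw [← ENNReal.ofReal_mul (by positivity)]
        _ = S := by
            rw [show ((ε^2)⁻¹*|Real.log ε|⁻¹) * (ε^2*|Real.log ε|) = 1 by field_simp,
              ENNReal.ofReal_one, one_mul]
    -- pointwise trig bound and lintegral bound
    have hmeas : Measurable fun x : ℝ => ENNReal.ofReal (x ^ 2) :=
      (measurable_id.pow_const 2).ennreal_ofReal
    have hpt : ∀ x : ℝ,
        (Set.Icc (-ε) ε).indicator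
          (fun x => ENNReal.ofReal (2/Real.pi^2 * z^2) * ENNReal.ofReal (x^2)) x
          ≤ ENNReal.ofReal (1 - Real.cos (z*x)) := by
      intro x
      rcases em (x ∈ Set.Icc (-ε) ε) with hx | hx
      · rw [Set.indicator_of_mem hx, ← ENNReal.ofReal_mul (by positivity)]
        apply ENNReal.ofReal_le_ofReal
        have hxabs : |x| ≤ ε := abs_le.mpr ⟨hx.1, hx.2⟩
        have habs : |z*x| ≤ Real.pi := by
          rw [abs_mul]
          calc |z| * |x| ≤ |z| * ε := by
                exact mul_le_mul_of_nonneg_left hxabs (abs_nonneg z)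
            _ = Real.pi := by rw [hεdef]; field_simp
        have h2 := stmt7_cos_key habs
        calc 2/Real.pi^2*z^2*x^2 = 2/Real.pi^2*(z*x)^2 := by ring
          _ ≤ 1 - Real.cos (z*x) := h2
      · rw [Set.indicator_of_notMem hx]; exact zero_le
    have hint : ENNReal.ofReal (2/Real.pi^2*z^2) * J
        ≤ ∫⁻ x, ENNReal.ofReal (1 - Real.cos (z*x)) ∂ν := by
      rw [hJ, ← lintegral_const_mul _ hmeas, ← lintegral_indicator measurableSet_Icc]
      exact lintegral_mono hpt
    -- lower bound for ψ z
    have hψlow : ENNReal.ofReal (2/Real.pi^2*z^2) * S ≤ ψ z := by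
      rw [hψ z, hSdef, mul_add]
      refine add_le_add ?_ hint
      rw [← ENNReal.ofReal_mul (by positivity)]
      apply ENNReal.ofReal_le_ofReal
      have hπ2 : (2:ℝ)/Real.pi^2 ≤ 1/2 := by
        rw [div_le_div_iff₀ (by positivity) (by norm_num)]
        nlinarith [Real.pi_gt_three]
      nlinarith [mul_nonneg hσ (sq_nonneg z), sq_nonneg z]
    have hchain : ENNReal.ofReal (2*c*Real.log (|z|/Real.pi)) ≤ ψ z := by
      calc ENNReal.ofReal (2*c*Real.log (|z|/Real.pi))
          = ENNReal.ofReal (2/Real.pi^2*z^2) * ENNReal.ofReal (c*(ε^2*|Real.log ε|)) := by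
            rw [← ENNReal.ofReal_mul (by positivity)]
            congr 1
            have h1 : z ≠ 0 := abs_pos.mp ht0
            rw [hlogε, hεdef, div_pow, sq_abs]
            field_simp
        _ ≤ ENNReal.ofReal (2/Real.pi^2*z^2) * S := mul_le_mul_right hSlow _
        _ ≤ ψ z := hψlow
    -- endgame: real-number estimate
    have hlog1 : 0 < Real.log (1 + |z|) := Real.log_pos (by linarith)
    have hkey : β * Real.log (1+|z|) ≤ 2*c*Real.log (|z|/Real.pi) := by
      have hlt : Real.log (1+|z|) ≤ Real.log 2 + Real.log |z| := by
        rw [← Real.log_mul (by norm_num) ht0.ne']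
        exact Real.log_le_log (by linarith) (by linarith)
      have hlogz : R ≤ Real.log |z| := (Real.le_log_iff_exp_le ht0).mpr htR
      have hsub : Real.log (|z|/Real.pi) = Real.log |z| - Real.log Real.pi :=
        Real.log_div ht0.ne' pi_pos.ne'
      have h2cβ : (0:ℝ) < 2*c - β := by linarith
      have hRmul : 2*c*Real.log Real.pi + β*Real.log 2 ≤ (2*c - β) * Real.log |z| := by
        rw [hR] at hlogz
        exact (div_le_iff₀ h2cβ).mp hlogz |>.trans_eq (mul_comm _ _)
      have hβlog : β * Real.log (1+|z|) ≤ β*(Real.log 2 + Real.log |z|) :=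
        mul_le_mul_of_nonneg_left hlt hβ0.le
      rw [hsub]; nlinarith [hRmul, hβlog]
    refine lt_of_lt_of_le hbβ ?_
    rw [ENNReal.le_div_iff_mul_le (Or.inl (ENNReal.ofReal_pos.mpr hlog1).ne')
      (Or.inl ENNReal.ofReal_ne_top)]
    calc ENNReal.ofReal β * ENNReal.ofReal (Real.log (1+|z|))
        = ENNReal.ofReal (β * Real.log (1+|z|)) := (ENNReal.ofReal_mul hβ0.le).symm
      _ ≤ ENNReal.ofReal (2*c*Real.log (|z|/Real.pi)) := ENNReal.ofReal_le_ofReal hkey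
      _ ≤ ψ z := hchain
  refine ⟨main, ?_, ?_⟩
  · intro hT
    have hLtop : liminf K (nhdsWithin (0 : ℝ) (Set.Ioi 0)) = ⊤ := hT.liminf_eq
    have htop : liminf (fun z : ℝ => ψ z / ENNReal.ofReal (Real.log (1 + |z|)))
        (comap (abs : ℝ → ℝ) atTop) = ⊤ := by
      refine top_unique ?_
      calc (⊤:ℝ≥0∞) = 2 * ⊤ := by simp
        _ = 2 * liminf K (nhdsWithin (0 : ℝ) (Set.Ioi 0)) := by rw [hLtop]
        _ ≤ _ := main
    refine ENNReal.tendsto_nhds_top_iff_nnreal.mpr fun r => ?_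
    exact eventually_lt_of_lt_liminf (by rw [htop]; exact ENNReal.coe_lt_top)
  · intro h
    have h4 : ((4:ℝ≥0∞))⁻¹ = 2⁻¹ * 2⁻¹ := by
      rw [show (4:ℝ≥0∞) = 2*2 by norm_num,
        ENNReal.mul_inv (Or.inl (by norm_num)) (Or.inl (by norm_num))]
    calc (1:ℝ≥0∞)/2 = 2 * (1/4) := by
          rw [one_div, one_div, h4, ← mul_assoc,
            ENNReal.mul_inv_cancel (by norm_num) (by norm_num), one_mul]
      _ < 2 * liminf K (nhdsWithin (0 : ℝ) (Set.Ioi 0)) := by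
          exact (ENNReal.mul_lt_mul_iff_right two_ne_zero ENNReal.ofNat_ne_top).mpr h
      _ ≤ _ := main
end

section
/- Let g : ℝ → [0,∞] be Borel measurable with g(0) = 0 and let f : [0,∞) → ℝ be Borel measurable. Then, with values in [0,∞] and the conventions 0·∞ = ∞·0 = 0, liminf_{|z|→∞} ( ∫_0^∞ g(f(t)·z) dt ) / log(1+|z|) ≥ λ¹({t ∈ [0,∞) : f(t) ≠ 0}) · liminf_{|z|→∞} g(z)/log(1+|z|), where liminf_{|z|→∞} denotes the limit inferior along real z with |z| → ∞. -/
open MeasureTheory Filter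
open scoped ENNReal

/-- `olog z = ofReal (log (1 + |z|))`. -/
private noncomputable def olog (z : ℝ) : ℝ≥0∞ := ENNReal.ofReal (Real.log (1 + |z|))

/-- liminf decreases under composition with a map into the filter. -/
private lemma liminf_comp_le {γ : Type*} {u : ℝ → ℝ≥0∞} {m : γ → ℝ}
    {F : Filter ℝ} {G : Filter γ} (hm : Tendsto m G F) :
    liminf u F ≤ liminf (fun x => u (m x)) G := by
  rw [liminf_eq, liminf_eq]
  exact sSup_le_sSup fun b hb => hm.eventually hb

/-- constant-multiple lower bound for liminf in `ℝ≥0∞`. -/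
private lemma mul_liminf_le {γ : Type*} {a : ℝ≥0∞} {u : γ → ℝ≥0∞} {F : Filter γ} :
    a * liminf u F ≤ liminf (fun x => a * u x) F := by
  rw [liminf_eq, liminf_eq, ENNReal.mul_sSup]
  exact iSup₂_le fun b hb => le_sSup (hb.mono fun x h => mul_le_mul_right h a)

/-- the key real inequality : `r * log (1+s) ≤ log (1 + c*s)` for large `s`. -/
private lemma log_ineq {c r : ℝ} (hc : 0 < c) (hr0 : 0 < r) (hr1 : r < 1) :
    ∃ M : ℝ, 1 ≤ M ∧ ∀ s, M ≤ s → r * Real.log (1 + s) ≤ Real.log (1 + c * s) := by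
  refine ⟨max 1 (Real.exp ((r * Real.log 2 - Real.log c) / (1 - r))), le_max_left _ _, ?_⟩
  intro s hs
  have hs1 : 1 ≤ s := le_trans (le_max_left _ _) hs
  have hlogs0 : 0 ≤ Real.log s := Real.log_nonneg hs1
  have hlogs : (r * Real.log 2 - Real.log c) / (1 - r) ≤ Real.log s := by
    calc (r * Real.log 2 - Real.log c) / (1 - r)
        = Real.log (Real.exp ((r * Real.log 2 - Real.log c) / (1 - r))) :=
          (Real.log_exp _).symm
      _ ≤ Real.log s := Real.log_le_log (Real.exp_pos _) (le_trans (le_max_right _ _) hs)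
  have h1 : r * Real.log 2 - Real.log c ≤ (1 - r) * Real.log s :=
    (div_le_iff₀ (by linarith : (0:ℝ) < 1 - r)).mp hlogs |>.trans_eq (mul_comm _ _)
  have hlog2 : Real.log (1 + s) ≤ Real.log 2 + Real.log s := by
    rw [← Real.log_mul (by norm_num) (by linarith)]
    exact Real.log_le_log (by linarith) (by linarith)
  have hcs : 0 < c * s := mul_pos hc (by linarith)
  have hlogc : Real.log c + Real.log s ≤ Real.log (1 + c * s) := by
    rw [← Real.log_mul (ne_of_gt hc) (by linarith)]
    exact Real.log_le_log hcs (by linarith)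
  calc r * Real.log (1 + s) ≤ r * (Real.log 2 + Real.log s) :=
        mul_le_mul_of_nonneg_left hlog2 hr0.le
    _ ≤ Real.log c + Real.log s := by nlinarith [h1]
    _ ≤ Real.log (1 + c * s) := hlogc

/-- Let `g : ℝ → [0,∞]` be Borel measurable with `g 0 = 0` and let
`f : [0,∞) → ℝ` be Borel measurable. Then, in `[0,∞]` (with `0·∞ = ∞·0 = 0`),
`liminf_{|z|→∞} (∫_0^∞ g (f t * z) dt) / log (1+|z|)`
`≥ λ¹ {t ≥ 0 : f t ≠ 0} · liminf_{|z|→∞} g z / log (1+|z|)`. -/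
theorem stmt8
    (g : ℝ → ℝ≥0∞) (hg : Measurable g) (hg0 : g 0 = 0)
    (f : ℝ → ℝ) (hf : Measurable f) :
    volume {t : ℝ | 0 ≤ t ∧ f t ≠ 0}
        * liminf (fun z : ℝ => g z / ENNReal.ofReal (Real.log (1 + |z|)))
            (comap (abs : ℝ → ℝ) atTop)
      ≤ liminf
          (fun z : ℝ => (∫⁻ t in Set.Ici (0 : ℝ), g (f t * z) ∂volume)
              / ENNReal.ofReal (Real.log (1 + |z|)))
          (comap (abs : ℝ → ℝ) atTop) := by
  show volume {t : ℝ | 0 ≤ t ∧ f t ≠ 0}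
        * liminf (fun z : ℝ => g z / olog z) (comap (abs : ℝ → ℝ) atTop)
      ≤ liminf (fun z : ℝ => (∫⁻ t in Set.Ici (0 : ℝ), g (f t * z) ∂volume) / olog z)
          (comap (abs : ℝ → ℝ) atTop)
  set F : Filter ℝ := comap (abs : ℝ → ℝ) atTop with hFdef
  set L : ℝ≥0∞ := liminf (fun z : ℝ => g z / olog z) F with hLdef
  set I : ℝ → ℝ≥0∞ :=
    fun z => (∫⁻ t in Set.Ici (0 : ℝ), g (f t * z) ∂volume) / olog z with hIdef
  set S : Set ℝ := {t : ℝ | 0 ≤ t ∧ f t ≠ 0} with hSdef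
  -- eventually |z| is large along F
  have hF : ∀ M : ℝ, ∀ᶠ z : ℝ in F, M ≤ |z| := fun M =>
    tendsto_comap.eventually (eventually_ge_atTop M)
  refine ENNReal.le_of_forall_lt_one_mul_le fun a ha => ?_
  rcases eq_or_ne a 0 with rfl | ha0
  · simp
  rcases eq_or_ne (liminf I F) ⊤ with htop | hfin
  · rw [htop]; exact le_top
  -- basic facts about a
  have haT : a ≠ ⊤ := ha.ne_top
  set r : ℝ := a.toReal with hrdef
  have hr0 : 0 < r := ENNReal.toReal_pos ha0 haT
  have hr1 : r < 1 := by
    have := ENNReal.toReal_lt_toReal haT (by norm_num : (1:ℝ≥0∞) ≠ ⊤) |>.mpr ha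
    simpa using this
  have har : ENNReal.ofReal r = a := ENNReal.ofReal_toReal haT
  -- key pointwise lower bound
  have key : ∀ t : ℝ, f t ≠ 0 →
      a * L ≤ liminf (fun z : ℝ => g (f t * z) / olog z) F := by
    intro t ht
    have hc : 0 < |f t| := abs_pos.mpr ht
    obtain ⟨M, hM1, hM⟩ := log_ineq hc hr0 hr1
    -- the multiplication map tends to F
    have hm : Tendsto (fun z : ℝ => f t * z) F F := by
      rw [hFdef, tendsto_comap_iff]
      have : (abs ∘ fun z : ℝ => f t * z) = fun z : ℝ => |f t| * |z| := by
        funext z; simp [abs_mul]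
      rw [this]
      exact Tendsto.const_mul_atTop hc tendsto_comap
    have hcomp : L ≤ liminf (fun z : ℝ => g (f t * z) / olog (f t * z)) F :=
      liminf_comp_le hm
    -- eventual comparison
    have hev : ∀ᶠ z : ℝ in F,
        a * (g (f t * z) / olog (f t * z)) ≤ g (f t * z) / olog z := by
      filter_upwards [hF M, hF 1] with z hzM hz1
      set p : ℝ := Real.log (1 + |z|) with hpdef
      set q : ℝ := Real.log (1 + |f t * z|) with hqdef
      have hp : 0 < p := Real.log_pos (by linarith)
      have hq : 0 < q := Real.log_pos (by
        have : 0 < |f t * z| := by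
          rw [abs_mul]; exact mul_pos hc (by linarith)
        linarith)
      have hrpq : r * p ≤ q := by
        have := hM |z| hzM
        rw [hqdef, abs_mul]
        exact this
      have hkey : a * (ENNReal.ofReal q)⁻¹ ≤ (ENNReal.ofReal p)⁻¹ := by
        rw [← har, ← ENNReal.ofReal_inv_of_pos hq, ← ENNReal.ofReal_mul hr0.le,
          ← ENNReal.ofReal_inv_of_pos hp]
        refine ENNReal.ofReal_le_ofReal ?_
        rw [← div_eq_mul_inv, inv_eq_one_div, div_le_div_iff₀ hq hp, one_mul]
        exact hrpq
      have h1 : olog (f t * z) = ENNReal.ofReal q := rfl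
      have h2 : olog z = ENNReal.ofReal p := rfl
      rw [h1, h2, div_eq_mul_inv, div_eq_mul_inv, mul_left_comm]
      exact mul_le_mul_right hkey _
    calc a * L ≤ a * liminf (fun z : ℝ => g (f t * z) / olog (f t * z)) F :=
          mul_le_mul_right hcomp a
      _ ≤ liminf (fun z : ℝ => a * (g (f t * z) / olog (f t * z))) F := mul_liminf_le
      _ ≤ liminf (fun z : ℝ => g (f t * z) / olog z) F := liminf_le_liminf hev
  -- choose a sequence realizing the liminf
  set A : ℕ → ℝ≥0∞ := fun n => ⨅ (z : ℝ) (_ : (n : ℝ) ≤ |z|), I z with hAdef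
  have hA_le : ∀ n, A n ≤ liminf I F := by
    intro n
    rw [liminf_eq]
    refine le_sSup ?_
    refine (hF n).mono fun z hz => ?_
    refine iInf_le_of_le z ?_
    exact iInf_le _ hz
  have hchoice : ∀ n : ℕ, ∃ z : ℝ, (n : ℝ) ≤ |z| ∧ I z ≤ A n + ((n : ℝ≥0∞))⁻¹ := by
    intro n
    have hAne : A n ≠ ⊤ := fun h => hfin (top_le_iff.mp (h ▸ hA_le n))
    have hlt : A n < A n + ((n : ℝ≥0∞))⁻¹ :=
      ENNReal.lt_add_right hAne (ENNReal.inv_ne_zero.mpr (ENNReal.natCast_ne_top n))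
    rw [hAdef] at hlt
    simp only [iInf_lt_iff] at hlt
    obtain ⟨z, hz, h⟩ := hlt
    exact ⟨z, hz, h.le⟩
  choose x hx1 hx2 using hchoice
  have hxF : Tendsto x atTop F := by
    rw [hFdef, tendsto_comap_iff]
    exact tendsto_atTop_mono (fun n => hx1 n) tendsto_natCast_atTop_atTop
  have hseq : liminf (fun n => I (x n)) atTop ≤ liminf I F := by
    have h0 : Tendsto (fun n : ℕ => liminf I F + ((n : ℝ≥0∞))⁻¹) atTop (nhds (liminf I F)) := by
      simpa using ENNReal.tendsto_inv_nat_nhds_zero.const_add (liminf I F)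
    calc liminf (fun n => I (x n)) atTop
        ≤ liminf (fun n : ℕ => liminf I F + ((n : ℝ≥0∞))⁻¹) atTop :=
          liminf_le_liminf (Eventually.of_forall fun n =>
            (hx2 n).trans (add_le_add (hA_le n) le_rfl))
      _ ≤ limsup (fun n : ℕ => liminf I F + ((n : ℝ≥0∞))⁻¹) atTop := liminf_le_limsup
      _ = liminf I F := h0.limsup_eq
  -- Fatou's lemma for the chosen sequence
  have hfatou :
      (∫⁻ t in Set.Ici (0 : ℝ), liminf (fun n => g (f t * x n) / olog (x n)) atTop ∂volume)
        ≤ liminf (fun n => I (x n)) atTop := by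
    have hmeas : ∀ n : ℕ, Measurable fun t : ℝ => g (f t * x n) / olog (x n) := fun n =>
      (hg.comp (hf.mul_const (x n))).div_const _
    have := lintegral_liminf_le (μ := volume.restrict (Set.Ici (0:ℝ))) (u := atTop) hmeas
    refine this.trans ?_
    refine liminf_le_liminf (Eventually.of_forall fun n => ?_)
    rw [hIdef]
    simp only [div_eq_mul_inv]
    exact le_of_eq (lintegral_mul_const _
      ((hg.comp (hf.mul_const (x n)) : Measurable fun t : ℝ => g (f t * x n))))
  -- pointwise bound transfers to the sequence
  have hpt : ∀ t ∈ S, a * L ≤ liminf (fun n => g (f t * x n) / olog (x n)) atTop := by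
    intro t ht
    refine (key t ht.2).trans ?_
    exact liminf_comp_le (u := fun z => g (f t * z) / olog z) hxF
  -- measurability of S
  have hS : MeasurableSet S := by
    have : S = Set.Ici (0:ℝ) ∩ f ⁻¹' ({0}ᶜ) := by
      ext t; simp [hSdef, Set.mem_setOf_eq, and_comm]
    rw [this]
    exact measurableSet_Ici.inter (hf (measurableSet_singleton 0).compl)
  -- put everything together
  have hlow : volume S * (a * L)
      ≤ ∫⁻ t in Set.Ici (0 : ℝ), liminf (fun n => g (f t * x n) / olog (x n)) atTop ∂volume := by
    calc volume S * (a * L) = (a * L) * volume S := mul_comm _ _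
      _ = ∫⁻ _ in S, (a * L) ∂volume := (setLIntegral_const S (a * L)).symm
      _ ≤ ∫⁻ t in S, liminf (fun n => g (f t * x n) / olog (x n)) atTop ∂volume :=
          setLIntegral_mono' hS hpt
      _ ≤ ∫⁻ t in Set.Ici (0 : ℝ), liminf (fun n => g (f t * x n) / olog (x n)) atTop ∂volume :=
          lintegral_mono_set fun t ht => ht.1
  calc a * (volume S * L) = volume S * (a * L) := by ring
    _ ≤ _ := hlow
    _ ≤ liminf (fun n => I (x n)) atTop := hfatou
    _ ≤ liminf I F := hseq
end

section
/- Let 0 < α < β be real numbers and set k = ⌊α/(β−α)⌋ + 1. Then the set of all finite sums of elements of the interval [α, β], including the empty sum, satisfies { ∑_{j=1}^n b_j : n ∈ ℕ₀, b_j ∈ [α,β] for all j } = {0} ∪ ( ⋃_{ℓ=1}^{k−1} [ℓα, ℓβ] ) ∪ [kα, ∞). -/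
open scoped BigOperators

/-- For `0 < α < β` and `k = ⌊α/(β-α)⌋ + 1`, the set of all finite sums of
elements of `[α, β]` (including the empty sum) equals
`{0} ∪ (⋃_{ℓ=1}^{k-1} [ℓα, ℓβ]) ∪ [kα, ∞)`. -/
theorem stmt9
    (α β : ℝ) (hα : 0 < α) (hαβ : α < β)
    (k : ℕ) (hk : k = ⌊α / (β - α)⌋₊ + 1) :
    {x : ℝ | ∃ (n : ℕ) (b : Fin n → ℝ), (∀ j, b j ∈ Set.Icc α β) ∧ ∑ j, b j = x}
      = ({0} : Set ℝ)
          ∪ (⋃ ℓ ∈ Set.Ico 1 k, Set.Icc ((ℓ : ℝ) * α) ((ℓ : ℝ) * β))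
          ∪ Set.Ici ((k : ℝ) * α) := by
  have hβα : 0 < β - α := sub_pos.2 hαβ
  have hk1 : 1 ≤ k := by omega
  have hkgt : α / (β - α) < (k : ℝ) := by
    rw [hk]; push_cast; exact Nat.lt_floor_add_one _
  have hkα : α < (k : ℝ) * (β - α) := by
    rwa [div_lt_iff₀ hβα] at hkgt
  ext x
  simp only [Set.mem_setOf_eq, Set.mem_union, Set.mem_singleton_iff, Set.mem_iUnion,
    Set.mem_Icc, Set.mem_Ici, Set.mem_Ico, exists_prop]
  constructor
  · rintro ⟨n, b, hb, rfl⟩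
    have hlb : (n : ℝ) * α ≤ ∑ j, b j := by
      calc (n : ℝ) * α = ∑ _j : Fin n, α := by simp [mul_comm]
        _ ≤ ∑ j, b j := Finset.sum_le_sum fun j _ => (hb j).1
    have hub : ∑ j, b j ≤ (n : ℝ) * β := by
      calc ∑ j, b j ≤ ∑ _j : Fin n, β := Finset.sum_le_sum fun j _ => (hb j).2
        _ = (n : ℝ) * β := by simp [mul_comm]
    rcases Nat.eq_zero_or_pos n with h0 | hpos
    · left; left; subst h0; simp
    by_cases hn : n < k
    · left; right; exact ⟨n, ⟨hpos, hn⟩, hlb, hub⟩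
    · right
      have hkn : (k : ℝ) ≤ n := by exact_mod_cast not_lt.1 hn
      calc (k : ℝ) * α ≤ (n : ℝ) * α := by nlinarith
        _ ≤ _ := hlb
  · rintro ((rfl | ⟨ℓ, ⟨hℓ1, hℓk⟩, hl, hu⟩) | hx)
    · exact ⟨0, fun j => 0, by simp, by simp⟩
    · have hℓ0 : (0 : ℝ) < ℓ := by exact_mod_cast hℓ1
      refine ⟨ℓ, fun _ => x / ℓ, fun j => ⟨?_, ?_⟩, ?_⟩
      · rw [le_div_iff₀ hℓ0]; linarith
      · rw [div_le_iff₀ hℓ0]; linarith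
      · simp only [Finset.sum_const, Finset.card_univ, Fintype.card_fin, nsmul_eq_mul]
        field_simp
    · set n := ⌊x / α⌋₊ with hn
      have hxk : (k : ℝ) * α ≤ x := hx
      have hxpos : 0 < x := lt_of_lt_of_le (by nlinarith) hxk
      have hdiv : (k : ℝ) ≤ x / α := by rw [le_div_iff₀ hα]; linarith
      have hkn : k ≤ n := Nat.le_floor hdiv
      have hnα : (n : ℝ) * α ≤ x := by
        have := Nat.floor_le (le_of_lt (div_pos hxpos hα))
        rw [← hn] at this
        calc (n : ℝ) * α ≤ (x / α) * α := by nlinarith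
          _ = x := by field_simp
      have hxlt : x < ((n : ℝ) + 1) * α := by
        have := Nat.lt_floor_add_one (x / α)
        rw [← hn] at this
        calc x = (x / α) * α := by field_simp
          _ < ((n : ℝ) + 1) * α := by nlinarith
      have hknR : (k : ℝ) ≤ n := by exact_mod_cast hkn
      have hnβ : x ≤ (n : ℝ) * β := by nlinarith
      have hn0 : (0 : ℝ) < n := lt_of_lt_of_le (by exact_mod_cast hk1) hknR
      refine ⟨n, fun _ => x / n, fun j => ⟨?_, ?_⟩, ?_⟩
      · rw [le_div_iff₀ hn0]; linarith
      · rw [div_le_iff₀ hn0]; linarith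
      · simp only [Finset.sum_const, Finset.card_univ, Fintype.card_fin, nsmul_eq_mul]
        field_simp
end

section
/- Let z₁ < 0 < z₂ be real numbers such that z₂/z₁ is irrational. Then the closure of { n₁ z₁ + n₂ z₂ : n₁, n₂ ∈ ℕ₀ } is all of ℝ. -/
/-- Nonvanishing of nontrivial nonnegative combinations. -/
private lemma stmt11_ne_zero (z₁ z₂ : ℝ) (h1 : z₁ < 0) (h2 : 0 < z₂)
    (hirr : Irrational (z₂ / z₁)) (n₁ n₂ : ℕ) (h : n₁ ≠ 0 ∨ n₂ ≠ 0) :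
    (n₁ : ℝ) * z₁ + (n₂ : ℝ) * z₂ ≠ 0 := by
  intro heq
  rcases Nat.eq_zero_or_pos n₂ with hn₂ | hn₂
  · subst hn₂
    simp only [Nat.cast_zero, zero_mul, add_zero] at heq
    rcases mul_eq_zero.mp heq with h' | h'
    · have : n₁ = 0 := Nat.cast_eq_zero.mp h'
      rcases h with h | h
      · exact h this
      · exact h rfl
    · exact absurd h' (ne_of_lt h1)
  · apply hirr
    refine ⟨-(n₁ : ℚ) / n₂, ?_⟩
    have hz₁ : z₁ ≠ 0 := ne_of_lt h1
    have hn₂' : (n₂ : ℝ) ≠ 0 := Nat.cast_ne_zero.mpr hn₂.ne'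
    push_cast
    rw [div_eq_div_iff hn₂' hz₁]
    linarith [heq]

/-- Pigeonhole: there is a nonzero element of the semigroup of absolute value `< ε`,
with positive `z₂`-coefficient. -/
private lemma stmt11_small (z₁ z₂ : ℝ) (h1 : z₁ < 0) (h2 : 0 < z₂)
    (hirr : Irrational (z₂ / z₁)) (ε : ℝ) (hε : 0 < ε) :
    ∃ a b : ℕ, a ≠ 0 ∧ |(b : ℝ) * z₁ + (a : ℝ) * z₂| < ε := by
  set β : ℝ := -z₁ with hβdef
  have hβ : 0 < β := by simpa [hβdef] using h1
  set α : ℝ := z₂ / β with hαdef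
  have hα : 0 < α := div_pos h2 hβ
  obtain ⟨N, hN⟩ := exists_nat_gt (β / ε)
  have hN0 : 0 < (N : ℝ) := lt_trans (div_pos hβ hε) hN
  have hNnat : 0 < N := by exact_mod_cast hN0
  -- pigeonhole on n ↦ ⌊N * fract (n α)⌋
  have hmaps : ∀ n ∈ Finset.range (N + 1),
      (⌊(N : ℝ) * Int.fract ((n : ℝ) * α)⌋) ∈ Finset.Ico (0 : ℤ) (N : ℤ) := by
    intro n _
    rw [Finset.mem_Ico]
    constructor
    · exact Int.floor_nonneg.mpr (mul_nonneg hN0.le (Int.fract_nonneg _))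
    · rw [Int.floor_lt]
      push_cast
      calc (N : ℝ) * Int.fract ((n : ℝ) * α) < (N : ℝ) * 1 := by
            exact mul_lt_mul_of_pos_left (Int.fract_lt_one _) hN0
        _ = (N : ℝ) := mul_one _
  have hcard : (Finset.Ico (0 : ℤ) (N : ℤ)).card < (Finset.range (N + 1)).card := by
    rw [Finset.card_range, Int.card_Ico]
    simp
  obtain ⟨m, hmmem, n, hnmem, hmn, hfeq⟩ :=
    Finset.exists_ne_map_eq_of_card_lt_of_maps_to hcard hmaps
  -- wlog m < n
  wlog hlt : m < n generalizing m n
  · exact this n hnmem m hmmem hmn.symm hfeq.symm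
      (lt_of_le_of_ne (not_lt.mp hlt) hmn.symm)
  have hmono : ⌊(m : ℝ) * α⌋ ≤ ⌊(n : ℝ) * α⌋ := by
    apply Int.floor_le_floor
    apply mul_le_mul_of_nonneg_right _ hα.le
    exact_mod_cast hlt.le
  refine ⟨n - m, (⌊(n : ℝ) * α⌋ - ⌊(m : ℝ) * α⌋).toNat, by omega, ?_⟩
  have hb : ((⌊(n : ℝ) * α⌋ - ⌊(m : ℝ) * α⌋).toNat : ℝ)
      = (⌊(n : ℝ) * α⌋ : ℝ) - (⌊(m : ℝ) * α⌋ : ℝ) := by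
    have h0 : (0 : ℤ) ≤ ⌊(n : ℝ) * α⌋ - ⌊(m : ℝ) * α⌋ := by omega
    exact_mod_cast congrArg (fun z : ℤ => (z : ℝ)) (Int.toNat_of_nonneg h0)
  have ha : ((n - m : ℕ) : ℝ) = (n : ℝ) - (m : ℝ) := by
    push_cast [Nat.cast_sub hlt.le]
    ring
  have hz₂ : z₂ = β * α := by
    rw [hαdef, mul_div_cancel₀ _ (ne_of_gt hβ)]
  have key : ((⌊(n : ℝ) * α⌋ - ⌊(m : ℝ) * α⌋).toNat : ℝ) * z₁ + ((n - m : ℕ) : ℝ) * z₂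
      = β * (Int.fract ((n : ℝ) * α) - Int.fract ((m : ℝ) * α)) := by
    rw [hb, ha, hz₂]
    have hz₁' : z₁ = -β := by rw [hβdef]; ring
    rw [hz₁', Int.fract, Int.fract]
    ring
  rw [key, abs_mul, abs_of_pos hβ]
  have hfr : |Int.fract ((n : ℝ) * α) - Int.fract ((m : ℝ) * α)| < 1 / N := by
    have h1' : |(N : ℝ) * Int.fract ((n : ℝ) * α) - (N : ℝ) * Int.fract ((m : ℝ) * α)| < 1 :=
      Int.abs_sub_lt_one_of_floor_eq_floor hfeq.symm
    rw [← mul_sub, abs_mul, abs_of_pos hN0] at h1'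
    rw [lt_div_iff₀ hN0, mul_comm]
    exact h1'
  calc β * |Int.fract ((n : ℝ) * α) - Int.fract ((m : ℝ) * α)| < β * (1 / N) :=
        mul_lt_mul_of_pos_left hfr hβ
    _ < ε := by
        rw [mul_one_div, div_lt_iff₀ hN0]
        rw [div_lt_iff₀ hε] at hN
        linarith [hN]

/-- There are small positive elements of the semigroup. -/
private lemma stmt11_pos (z₁ z₂ : ℝ) (h1 : z₁ < 0) (h2 : 0 < z₂)
    (hirr : Irrational (z₂ / z₁)) (ε : ℝ) (hε : 0 < ε) :
    ∃ n₁ n₂ : ℕ, 0 < (n₁ : ℝ) * z₁ + (n₂ : ℝ) * z₂ ∧ (n₁ : ℝ) * z₁ + (n₂ : ℝ) * z₂ < ε := by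
  obtain ⟨a, b, ha, habs⟩ := stmt11_small z₁ z₂ h1 h2 hirr ε hε
  set e : ℝ := (b : ℝ) * z₁ + (a : ℝ) * z₂ with hedef
  have hne : e ≠ 0 := stmt11_ne_zero z₁ z₂ h1 h2 hirr b a (Or.inr ha)
  rcases hne.lt_or_gt with hneg | hpos
  · -- e < 0 : climb down from z₂
    have hnegpos : 0 < -e := by linarith
    set K : ℤ := ⌊z₂ / (-e)⌋ with hKdef
    have hK0 : 0 ≤ K := Int.floor_nonneg.mpr (le_of_lt (div_pos h2 hnegpos))
    have hKle : (K : ℝ) * (-e) ≤ z₂ := by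
      rw [← le_div_iff₀ hnegpos]
      exact Int.floor_le _
    have hKgt : z₂ < ((K : ℝ) + 1) * (-e) := by
      rw [← div_lt_iff₀ hnegpos]
      exact Int.lt_floor_add_one (z₂ / -e)
    refine ⟨K.toNat * b, 1 + K.toNat * a, ?_, ?_⟩
    all_goals {
      have hKc : ((K.toNat : ℕ) : ℝ) = (K : ℝ) := by
        exact_mod_cast Int.toNat_of_nonneg hK0
      have hval : ((K.toNat * b : ℕ) : ℝ) * z₁ + ((1 + K.toNat * a : ℕ) : ℝ) * z₂
          = z₂ + (K : ℝ) * e := by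
        push_cast [hKc]
        rw [hedef]; ring
      rw [hval]
      first
      | · -- positivity
          rcases lt_or_eq_of_le (by linarith : 0 ≤ z₂ + (K : ℝ) * e) with h' | h'
          · exact h'
          · exfalso
            apply stmt11_ne_zero z₁ z₂ h1 h2 hirr (K.toNat * b) (1 + K.toNat * a)
              (Or.inr (by omega))
            rw [hval]; exact h'.symm
      | · -- upper bound
          have : z₂ + (K : ℝ) * e < -e := by nlinarith
          have habs' : -e < ε := by
            rcases abs_lt.mp habs with ⟨hl, _⟩; linarith
          linarith
    }
  · -- e > 0 : works directly
    refine ⟨b, a, hpos, ?_⟩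
    rcases abs_lt.mp habs with ⟨_, hr⟩
    exact hr

/-- There are small negative elements of the semigroup. -/
private lemma stmt11_neg (z₁ z₂ : ℝ) (h1 : z₁ < 0) (h2 : 0 < z₂)
    (hirr : Irrational (z₂ / z₁)) (ε : ℝ) (hε : 0 < ε) :
    ∃ n₁ n₂ : ℕ, (n₁ : ℝ) * z₁ + (n₂ : ℝ) * z₂ < 0 ∧ -ε < (n₁ : ℝ) * z₁ + (n₂ : ℝ) * z₂ := by
  obtain ⟨a, b, ha, habs⟩ := stmt11_small z₁ z₂ h1 h2 hirr ε hε
  set e : ℝ := (b : ℝ) * z₁ + (a : ℝ) * z₂ with hedef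
  have hne : e ≠ 0 := stmt11_ne_zero z₁ z₂ h1 h2 hirr b a (Or.inr ha)
  rcases hne.lt_or_gt with hneg | hpos
  · -- e < 0 : works directly
    refine ⟨b, a, hneg, ?_⟩
    rcases abs_lt.mp habs with ⟨hl, _⟩
    exact hl
  · -- e > 0 : climb up from z₁
    set K : ℤ := ⌊(-z₁) / e⌋ with hKdef
    have hnz : 0 < -z₁ := by linarith
    have hK0 : 0 ≤ K := Int.floor_nonneg.mpr (le_of_lt (div_pos hnz hpos))
    have hKle : (K : ℝ) * e ≤ -z₁ := by
      rw [← le_div_iff₀ hpos]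
      exact Int.floor_le _
    have hKgt : -z₁ < ((K : ℝ) + 1) * e := by
      rw [← div_lt_iff₀ hpos]
      exact Int.lt_floor_add_one (-z₁ / e)
    refine ⟨1 + K.toNat * b, K.toNat * a, ?_, ?_⟩
    all_goals {
      have hKc : ((K.toNat : ℕ) : ℝ) = (K : ℝ) := by
        exact_mod_cast Int.toNat_of_nonneg hK0
      have hval : ((1 + K.toNat * b : ℕ) : ℝ) * z₁ + ((K.toNat * a : ℕ) : ℝ) * z₂
          = z₁ + (K : ℝ) * e := by
        push_cast [hKc]
        rw [hedef]; ring
      rw [hval]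
      first
      | · -- negativity
          rcases lt_or_eq_of_le (by linarith : z₁ + (K : ℝ) * e ≤ 0) with h' | h'
          · exact h'
          · exfalso
            apply stmt11_ne_zero z₁ z₂ h1 h2 hirr (1 + K.toNat * b) (K.toNat * a)
              (Or.inl (by omega))
            rw [hval]; exact h'
      | · -- lower bound
          have : -e < z₁ + (K : ℝ) * e := by nlinarith
          have habs' : e < ε := by
            rcases abs_lt.mp habs with ⟨_, hr⟩; linarith
          linarith
    }

/-- If `z₁ < 0 < z₂` and `z₂ / z₁` is irrational, then the additive
semigroup `{n₁ z₁ + n₂ z₂ : n₁, n₂ ∈ ℕ₀}` is dense in `ℝ`. -/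
theorem stmt11
    (z₁ z₂ : ℝ) (h1 : z₁ < 0) (h2 : 0 < z₂) (hirr : Irrational (z₂ / z₁)) :
    closure {x : ℝ | ∃ n₁ n₂ : ℕ, x = (n₁ : ℝ) * z₁ + (n₂ : ℝ) * z₂} = Set.univ := by
  apply Set.eq_univ_of_forall
  intro x
  rw [Metric.mem_closure_iff]
  intro ε hε
  rcases le_or_gt 0 x with hx | hx
  · -- x ≥ 0 : use small positive element
    obtain ⟨n₁, n₂, hspos, hslt⟩ := stmt11_pos z₁ z₂ h1 h2 hirr ε hε
    set s : ℝ := (n₁ : ℝ) * z₁ + (n₂ : ℝ) * z₂ with hsdef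
    set K : ℤ := ⌊x / s⌋ with hKdef
    have hK0 : 0 ≤ K := Int.floor_nonneg.mpr (div_nonneg hx hspos.le)
    have hKle : (K : ℝ) * s ≤ x := by
      rw [← le_div_iff₀ hspos]; exact Int.floor_le _
    have hKgt : x < ((K : ℝ) + 1) * s := by
      rw [← div_lt_iff₀ hspos]; exact Int.lt_floor_add_one (x / s)
    refine ⟨(K : ℝ) * s, ⟨K.toNat * n₁, K.toNat * n₂, ?_⟩, ?_⟩
    · have hKc : ((K.toNat : ℕ) : ℝ) = (K : ℝ) := by
        exact_mod_cast Int.toNat_of_nonneg hK0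
      push_cast [hKc]
      rw [hsdef]; ring
    · rw [Real.dist_eq, abs_sub_lt_iff]
      constructor <;> nlinarith
  · -- x < 0 : use small negative element
    obtain ⟨n₁, n₂, hsneg, hsgt⟩ := stmt11_neg z₁ z₂ h1 h2 hirr ε hε
    set s : ℝ := (n₁ : ℝ) * z₁ + (n₂ : ℝ) * z₂ with hsdef
    set K : ℤ := ⌊x / s⌋ with hKdef
    have hK0 : 0 ≤ K := Int.floor_nonneg.mpr
      (le_of_lt (div_pos_of_neg_of_neg hx hsneg))
    have hKle : (K : ℝ) ≤ x / s := Int.floor_le _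
    have hKgt : x / s < (K : ℝ) + 1 := Int.lt_floor_add_one (x / s)
    have hxs : x / s * s = x := div_mul_cancel₀ x (ne_of_lt hsneg)
    have hKle' : x ≤ (K : ℝ) * s := by
      have := mul_le_mul_of_nonpos_right hKle (le_of_lt hsneg)
      rw [hxs] at this
      linarith [this]
    have hKgt' : ((K : ℝ) + 1) * s < x := by
      have := mul_lt_mul_of_neg_right hKgt hsneg
      rw [hxs] at this
      linarith [this]
    refine ⟨(K : ℝ) * s, ⟨K.toNat * n₁, K.toNat * n₂, ?_⟩, ?_⟩
    · have hKc : ((K.toNat : ℕ) : ℝ) = (K : ℝ) := by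
        exact_mod_cast Int.toNat_of_nonneg hK0
      push_cast [hKc]
      rw [hsdef]; ring
    · rw [Real.dist_eq, abs_sub_lt_iff]
      constructor <;> nlinarith
end

section
/- Let t > 0 and let h : [0,t] → ℝ be Lebesgue integrable. Then ∫_0^t ∫_0^t min(s, u) h(s) h(u) ds du = ∫_0^t ( ∫_r^t h(u) du )² dr; in particular, this double integral is nonnegative, and if it equals 0 then h = 0 Lebesgue-almost everywhere on [0,t]. -/
open MeasureTheory

lemma aux_ae_zero (μ : Measure ℝ) [IsFiniteMeasure μ] (f : ℝ → ℝ) (hf : Integrable f μ)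
    (h0 : ∀ x : ℝ, ∫ s in Set.Iic x, f s ∂μ = 0) : ∀ᵐ s ∂μ, f s = 0 := by
  have hU : (⋃ n : ℕ, Set.Iic ((n : ℝ))) = Set.univ := by
    ext x
    simp only [Set.mem_iUnion, Set.mem_Iic, Set.mem_univ, iff_true]
    exact ⟨⌈x⌉₊, Nat.le_ceil x⟩
  have huniv : ∫ s, f s ∂μ = 0 := by
    have hm : Monotone fun n : ℕ => Set.Iic ((n : ℝ)) := fun a b hab =>
      Set.Iic_subset_Iic.2 (by exact_mod_cast hab)
    have ht := tendsto_setIntegral_of_monotone (fun n : ℕ => measurableSet_Iic) hm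
      (by rw [hU]; exact hf.integrableOn)
    rw [hU, setIntegral_univ] at ht
    simp only [h0] at ht
    exact tendsto_nhds_unique ht tendsto_const_nhds
  have key : ∀ s : Set ℝ, MeasurableSet s → ∫ x in s, f x ∂μ = 0 := by
    intro s hs
    refine MeasurableSpace.induction_on_inter (C := fun s _ => ∫ x in s, f x ∂μ = 0)
      (borel_eq_generateFrom_Iic ℝ) isPiSystem_Iic ?_ ?_ ?_ ?_ s hs
    · simp
    · rintro S ⟨x, rfl⟩
      exact h0 x
    · intro u hu hCu
      have hadd := integral_add_compl hu hf
      rw [hCu, huniv] at hadd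
      linarith
    · intro gseq hdisj hmeas hC
      rw [integral_iUnion hmeas hdisj hf.integrableOn]
      simp [hC]
  exact hf.ae_eq_zero_of_forall_setIntegral_eq_zero fun s hs _ => key s hs

lemma cont_ae_zero_Icc {f : ℝ → ℝ} (hf : Continuous f) {a b : ℝ} (hab : a < b)
    (h0 : ∀ᵐ x ∂(volume.restrict (Set.Icc a b)), f x = 0) : ∀ x ∈ Set.Icc a b, f x = 0 := by
  by_contra hc
  push_neg at hc
  obtain ⟨x0, hx0, hfx0⟩ := hc
  have hopen : IsOpen {x : ℝ | f x ≠ 0} := isOpen_ne.preimage hf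
  obtain ⟨ε, εpos, hball⟩ := Metric.isOpen_iff.1 hopen x0 hfx0
  set A := max a (x0 - ε / 2) with hA
  set B := min b (x0 + ε / 2) with hB
  have hAB : A < B := by
    rw [hA, hB]
    rw [max_lt_iff]
    constructor
    · rw [lt_min_iff]; exact ⟨hab, by linarith [hx0.1]⟩
    · rw [lt_min_iff]; exact ⟨by linarith [hx0.2], by linarith⟩
  have hsub : Set.Ioo A B ⊆ {x : ℝ | f x ≠ 0} ∩ Set.Icc a b := by
    intro y hy
    have h1 : a ≤ y := le_trans (le_max_left _ _) hy.1.le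
    have h2 : y ≤ b := le_trans hy.2.le (min_le_left _ _)
    have h3 : x0 - ε / 2 < y := lt_of_le_of_lt (le_max_right a _) hy.1
    have h4 : y < x0 + ε / 2 := lt_of_lt_of_le hy.2 (min_le_right b _)
    refine ⟨hball ?_, h1, h2⟩
    rw [Metric.mem_ball, Real.dist_eq, abs_sub_lt_iff]
    constructor <;> linarith
  have hnull : volume ({x : ℝ | f x ≠ 0} ∩ Set.Icc a b) = 0 := by
    have := ae_iff.1 h0
    rwa [Measure.restrict_apply (hopen.measurableSet)] at this
  have hle : volume (Set.Ioo A B) = 0 :=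
    le_antisymm (hnull ▸ measure_mono hsub) zero_le
  rw [Real.volume_Ioo] at hle
  rw [ENNReal.ofReal_eq_zero] at hle
  linarith
open MeasureTheory

/-- For `t > 0` and `h : [0,t] → ℝ` Lebesgue integrable,
`∫_0^t ∫_0^t min(s,u) h(s) h(u) ds du = ∫_0^t (∫_r^t h(u) du)² dr`; in particular the
double integral is nonnegative, and if it vanishes then `h = 0` Lebesgue-a.e. on `[0,t]`. -/
theorem stmt12
    (t : ℝ) (ht : 0 < t) (h : ℝ → ℝ)
    (hint : IntegrableOn h (Set.Icc (0 : ℝ) t) volume) :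
    (∫ s in Set.Icc (0 : ℝ) t, ∫ u in Set.Icc (0 : ℝ) t, min s u * h s * h u)
        = ∫ r in Set.Icc (0 : ℝ) t, (∫ u in Set.Icc r t, h u) ^ 2
    ∧ 0 ≤ ∫ s in Set.Icc (0 : ℝ) t, ∫ u in Set.Icc (0 : ℝ) t, min s u * h s * h u
    ∧ ((∫ s in Set.Icc (0 : ℝ) t, ∫ u in Set.Icc (0 : ℝ) t, min s u * h s * h u) = 0 →
        ∀ᵐ s ∂(volume.restrict (Set.Icc (0 : ℝ) t)), h s = 0) := by
  set I : Set ℝ := Set.Icc (0 : ℝ) t with hIdef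
  have hIme : MeasurableSet I := measurableSet_Icc
  set μ : Measure ℝ := volume.restrict I with hμdef
  haveI : IsFiniteMeasure μ := by
    constructor
    rw [hμdef, Measure.restrict_apply_univ]
    exact measure_Icc_lt_top
  have hintμ : Integrable h μ := hint
  -- indicator extension and primitive
  set e : ℝ → ℝ → ℝ := fun r x => if r ≤ x then 1 else 0 with hedef
  set g : ℝ → ℝ := I.indicator h with hgdef
  have hg : Integrable g volume := by
    rw [hgdef, integrable_indicator_iff hIme]; exact hint
  set G : ℝ → ℝ := fun r => ∫ x in (0 : ℝ)..r, g x with hGdef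
  have hGcont : Continuous G := hg.continuous_primitive 0
  set N : ℝ → ℝ := fun r => G t - G r with hNdef
  have hNcont : Continuous N := continuous_const.sub hGcont
  -- H = N on I
  have hHeq : ∀ r ∈ I, (∫ u in Set.Icc r t, h u) = N r := by
    intro r hr
    have h1 : (∫ u in Set.Icc r t, h u) = ∫ u in Set.Icc r t, g u := by
      refine setIntegral_congr_fun measurableSet_Icc fun x hx => ?_
      have hxI : x ∈ I := Set.mem_Icc.mpr ⟨le_trans hr.1 hx.1, hx.2⟩
      rw [hgdef, Set.indicator_of_mem hxI]
    rw [h1, integral_Icc_eq_integral_Ioc, ← intervalIntegral.integral_of_le hr.2]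
    have h2 := intervalIntegral.integral_interval_sub_left
      (hg.intervalIntegrable (a := 0) (b := t)) (hg.intervalIntegrable (a := 0) (b := r))
    rw [hNdef]
    exact h2.symm
  -- global bound on N
  set D : ℝ := |G t| + ∫ x, |g x| with hDdef
  have hGbd : ∀ r, |G r| ≤ ∫ x, |g x| := by
    intro r
    calc |G r| ≤ ∫ x in Set.uIoc 0 r, |g x| := by
          simpa using intervalIntegral.norm_integral_le_integral_norm_uIoc (f := g) (a := 0) (b := r)
      _ ≤ ∫ x, |g x| := setIntegral_le_integral hg.abs (ae_of_all _ fun x => abs_nonneg _)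
  have hNbd : ∀ r, |N r| ≤ D := by
    intro r
    rw [hNdef, hDdef]
    calc |G t - G r| ≤ |G t| + |G r| := abs_sub _ _
      _ ≤ |G t| + ∫ x, |g x| := by linarith [hGbd r]
  -- min formula
  have he01 : ∀ r x, |e r x| ≤ 1 := by
    intro r x; rw [hedef]; dsimp only; split_ifs <;> norm_num
  have hgmin : ∀ s ∈ I, ∀ u ∈ I, min s u = ∫ r, e r s * e r u ∂μ := by
    intro s hs u hu
    have h1 : ∀ r, e r s * e r u = (Set.Iic (min s u)).indicator (1 : ℝ → ℝ) r := by
      intro r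
      rw [hedef]; dsimp only
      by_cases hrs : r ≤ s <;> by_cases hru : r ≤ u <;>
        simp [Set.indicator_apply, Set.mem_Iic, le_min_iff, hrs, hru]
    simp_rw [h1]
    rw [integral_indicator_one measurableSet_Iic, hμdef, measureReal_def,
      Measure.restrict_apply measurableSet_Iic]
    have h2 : Set.Iic (min s u) ∩ I = Set.Icc 0 (min s u) := by
      ext x
      simp only [Set.mem_inter_iff, Set.mem_Iic, hIdef, Set.mem_Icc]
      constructor
      · rintro ⟨h1', h2', _⟩; exact ⟨h2', h1'⟩
      · rintro ⟨h1', h2'⟩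
        exact ⟨h2', h1', le_trans h2' (min_le_right s u |>.trans hu.2)⟩
    rw [h2, Real.volume_Icc, ENNReal.toReal_ofReal (by simp [le_min_iff, hs.1, hu.1])]
    simp
  -- value of ∫ e r u * h u
  have hHval : ∀ r ∈ I, (∫ u, e r u * h u ∂μ) = N r := by
    intro r hr
    have h1 : ∀ u, e r u * h u = (Set.Ici r).indicator h u := by
      intro u
      rw [hedef]; dsimp only
      by_cases hru : r ≤ u <;> simp [Set.indicator_apply, Set.mem_Ici, hru]
    simp_rw [h1]
    rw [hμdef, integral_indicator measurableSet_Ici,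
      Measure.restrict_restrict measurableSet_Ici]
    have h2 : Set.Ici r ∩ I = Set.Icc r t := by
      ext x
      simp only [Set.mem_inter_iff, Set.mem_Ici, hIdef, Set.mem_Icc]
      constructor
      · rintro ⟨h1', _, h3'⟩; exact ⟨h1', h3'⟩
      · rintro ⟨h1', h2'⟩; exact ⟨h1', le_trans hr.1 h1', h2'⟩
    rw [h2]
    exact hHeq r hr
  -- measurability pieces
  have hhfst : AEStronglyMeasurable (fun p : ℝ × ℝ => h p.1) (μ.prod μ) :=
    hintμ.aestronglyMeasurable.comp_fst
  have hE1 : Measurable fun p : ℝ × ℝ => e p.2 p.1 := by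
    rw [hedef]
    exact Measurable.ite (measurableSet_le measurable_snd measurable_fst)
      measurable_const measurable_const
  have hE2 : ∀ s : ℝ, Measurable fun p : ℝ × ℝ => e p.2 s := by
    intro s
    rw [hedef]
    exact Measurable.ite (measurableSet_le measurable_snd measurable_const)
      measurable_const measurable_const
  -- integrability for first swap
  have I1 : ∀ s : ℝ, Integrable (fun p : ℝ × ℝ => e p.2 s * e p.2 p.1 * h s * h p.1)
      (μ.prod μ) := by
    intro s
    refine Integrable.mono' (g := fun p : ℝ × ℝ => |h p.1| * |h s|)
      (hintμ.abs.mul_prod (integrable_const _)) ?_ (ae_of_all _ fun p => ?_)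
    · exact ((((hE2 s).mul hE1).mul measurable_const).aestronglyMeasurable.mul hhfst)
    · have h1 := he01 p.2 s
      have h2 := he01 p.2 p.1
      have h3 : ‖e p.2 s * e p.2 p.1 * h s * h p.1‖ =
          |e p.2 s| * |e p.2 p.1| * |h s| * |h p.1| := by
        rw [Real.norm_eq_abs, abs_mul, abs_mul, abs_mul]
      rw [h3]
      calc |e p.2 s| * |e p.2 p.1| * |h s| * |h p.1|
          ≤ 1 * 1 * |h s| * |h p.1| := by gcongr
        _ = |h p.1| * |h s| := by ring
  -- integrability for second swap
  have I2 : Integrable (fun p : ℝ × ℝ => e p.2 p.1 * h p.1 * N p.2) (μ.prod μ) := by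
    refine Integrable.mono' (g := fun p : ℝ × ℝ => |h p.1| * D)
      (hintμ.abs.mul_prod (integrable_const _)) ?_ (ae_of_all _ fun p => ?_)
    · exact (hE1.aestronglyMeasurable.mul hhfst).mul
        ((hNcont.comp continuous_snd).aestronglyMeasurable)
    · have h1 := he01 p.2 p.1
      have h2 := hNbd p.2
      have h0 : (0 : ℝ) ≤ D := le_trans (abs_nonneg _) h2
      have h3 : ‖e p.2 p.1 * h p.1 * N p.2‖ = |e p.2 p.1| * |h p.1| * |N p.2| := by
        rw [Real.norm_eq_abs, abs_mul, abs_mul]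
      rw [h3]
      calc |e p.2 p.1| * |h p.1| * |N p.2|
          ≤ 1 * |h p.1| * D := by gcongr
        _ = |h p.1| * D := by ring
  -- stage B
  have stageB : ∀ s ∈ I, (∫ u in Set.Icc (0 : ℝ) t, min s u * h s * h u)
      = ∫ r, e r s * h s * N r ∂μ := by
    intro s hs
    have step1 : (∫ u, min s u * h s * h u ∂μ)
        = ∫ u, (∫ r, e r s * e r u * h s * h u ∂μ) ∂μ := by
      rw [hμdef]
      refine setIntegral_congr_fun hIme fun u hu => ?_
      rw [hgmin s hs u hu, ← integral_mul_const, ← integral_mul_const]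
    have swap1 := integral_integral_swap
      (f := fun u r => e r s * e r u * h s * h u) (μ := μ) (ν := μ) (I1 s)
    have step2 : (∫ r, (∫ u, e r s * e r u * h s * h u ∂μ) ∂μ)
        = ∫ r, e r s * h s * N r ∂μ := by
      rw [hμdef]
      refine setIntegral_congr_fun hIme fun r hr => ?_
      have hre : ∀ u, e r s * e r u * h s * h u = (e r s * h s) * (e r u * h u) := by
        intro u; ring
      simp_rw [hre]
      rw [← hμdef, integral_const_mul, hHval r hr]
    calc (∫ u in Set.Icc (0 : ℝ) t, min s u * h s * h u)
        = ∫ u, (∫ r, e r s * e r u * h s * h u ∂μ) ∂μ := step1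
      _ = ∫ r, (∫ u, e r s * e r u * h s * h u ∂μ) ∂μ := swap1
      _ = ∫ r, e r s * h s * N r ∂μ := step2
  -- stage C
  have stageC : (∫ s in Set.Icc (0 : ℝ) t, ∫ u in Set.Icc (0 : ℝ) t, min s u * h s * h u)
      = ∫ r, N r ^ 2 ∂μ := by
    have step1 : (∫ s in Set.Icc (0 : ℝ) t, ∫ u in Set.Icc (0 : ℝ) t, min s u * h s * h u)
        = ∫ s, (∫ r, e r s * h s * N r ∂μ) ∂μ := by
      rw [hμdef]
      exact setIntegral_congr_fun hIme fun s hs => stageB s hs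
    have swap2 := integral_integral_swap
      (f := fun s r => e r s * h s * N r) (μ := μ) (ν := μ) I2
    have step2 : (∫ r, (∫ s, e r s * h s * N r ∂μ) ∂μ) = ∫ r, N r ^ 2 ∂μ := by
      rw [hμdef]
      refine setIntegral_congr_fun hIme fun r hr => ?_
      rw [← hμdef, integral_mul_const, hHval r hr, sq]
    rw [step1, swap2, step2]
  -- conclusion 1
  have conc1 : (∫ s in Set.Icc (0 : ℝ) t, ∫ u in Set.Icc (0 : ℝ) t, min s u * h s * h u)
      = ∫ r in Set.Icc (0 : ℝ) t, (∫ u in Set.Icc r t, h u) ^ 2 := by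
    rw [stageC, hμdef]
    refine (setIntegral_congr_fun hIme fun r hr => ?_).symm
    rw [hHeq r hr]
  refine ⟨conc1, ?_, ?_⟩
  · rw [stageC]
    exact integral_nonneg fun r => sq_nonneg _
  · intro hzero
    rw [stageC] at hzero
    have hint2 : IntegrableOn (fun r => N r ^ 2) I volume :=
      ((hNcont.pow 2).continuousOn).integrableOn_Icc
    have hae2 : ∀ᵐ r ∂μ, N r ^ 2 = 0 := by
      have := (setIntegral_eq_zero_iff_of_nonneg_ae
        (ae_of_all _ fun r => sq_nonneg (N r)) hint2).1 (by rw [← hμdef]; exact hzero)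
      filter_upwards [this] with r hr using hr
    have haeN : ∀ᵐ r ∂μ, N r = 0 := by
      filter_upwards [hae2] with r hr
      exact pow_eq_zero_iff (by norm_num) |>.1 hr
    have hNzero : ∀ r ∈ I, N r = 0 := cont_ae_zero_Icc hNcont ht haeN
    have hGt : G t = 0 := by
      have h0 := hNzero 0 ⟨le_refl 0, ht.le⟩
      rw [hNdef] at h0
      simpa [hGdef, intervalIntegral.integral_same] using h0
    have key : ∀ x : ℝ, ∫ s in Set.Iic x, h s ∂μ = 0 := by
      intro x
      rw [hμdef, Measure.restrict_restrict measurableSet_Iic]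
      by_cases hx : x < 0
      · have hempty : Set.Iic x ∩ I = ∅ := by
          ext y
          simp only [Set.mem_inter_iff, Set.mem_Iic, hIdef, Set.mem_Icc, Set.mem_empty_iff_false,
            iff_false, not_and]
          intro h1 h2
          linarith
        rw [hempty]
        simp
      · push_neg at hx
        set m : ℝ := min x t with hm
        have hmI : m ∈ I := ⟨le_min hx ht.le, min_le_right _ _⟩
        have hset : Set.Iic x ∩ I = Set.Icc 0 m := by
          ext y
          simp only [Set.mem_inter_iff, Set.mem_Iic, hIdef, Set.mem_Icc, hm, le_min_iff]
          tauto
        rw [hset]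
        have h1 : (∫ y in Set.Icc 0 m, h y) = ∫ y in Set.Icc 0 m, g y := by
          refine setIntegral_congr_fun measurableSet_Icc fun y hy => ?_
          have hyI : y ∈ I := Set.mem_Icc.mpr ⟨hy.1, le_trans hy.2 hmI.2⟩
          rw [hgdef, Set.indicator_of_mem hyI]
        rw [h1, integral_Icc_eq_integral_Ioc, ← intervalIntegral.integral_of_le hmI.1]
        have h2 := hNzero m hmI
        rw [hNdef] at h2
        have : G m = 0 := by dsimp only at h2 ⊢; linarith [hGt]
        rw [← hGdef] at *
        exact this
    exact aux_ae_zero μ h hintμ key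
end
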